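/- arXiv:1502.07922 — 4 statements merged into one kernel-verified Lean document; each statement's English description precedes it below -/
import Mathlib

section
/- Let K be a field of characteristic 2 and consider the Ginzburg DG-algebra G_{D_4} = (T, d) for the D_4 tree (vertices 1,2,3,4, central vertex 3), and let d_3 be the degree +1 k-linear derivation of T vanishing on all generators except d_3(c_3) = −c_{31}c_{13}c_{32}c_{23}. Then there is no k-linear derivation φ of T which preserves total degree, raises word length by exactly 2, and satisfies d_3 = d∘φ − φ∘d. (Consequently the obstruction class [d̃_3] ∈ HH²(G_{D_4}, G_{D_4}[−2]) is nonzero in characteristic 2.) -/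
/-- Adjacency of the `D_n` tree with vertices `1, …, n` and edges
`{1,3}, {2,3}, {3,4}, {4,5}, …, {n−1,n}`. -/
def DnAdj (n i j : ℕ) : Prop :=
  (i = 1 ∧ j = 3) ∨ (i = 3 ∧ j = 1) ∨ (i = 2 ∧ j = 3) ∨ (i = 3 ∧ j = 2) ∨
  (3 ≤ i ∧ j = i + 1 ∧ j ≤ n) ∨ (3 ≤ j ∧ i = j + 1 ∧ i ≤ n)

/-- The bigraded tensor algebra `T` over `k = ⊕_{i=1}^n K e_i` on generators `c i j` in
degree `0` (one for each ordered adjacent pair of the `D_n` tree, with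
`c i j ∈ e i ⬝ T ⬝ e j`) and generators `ℓ i` in degree `−1` (one for each vertex), which
underlies both the Chekanov–Eliashberg DG-algebra `B_n` of `Λ_{D_n}` and the Ginzburg
DG-algebra `G_{D_n}`.  The field `g` is the cohomological (Conley–Zehnder/total)
`ℤ`-grading and `w` is the word-length `ℕ`-grading; `free` is the universal property of
the tensor algebra over `k`, pinning `T` down up to isomorphism. -/
structure DnPres (K : Type) [Field K] (n : ℕ) : Type 1 where
  T : Type
  [ringT : Ring T]
  [algT : Algebra K T]
  e : ℕ → T
  c : ℕ → ℕ → T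
  l : ℕ → T
  g : ℤ → Submodule K T
  w : ℕ → Submodule K T
  e_zero : ∀ i, ¬ (1 ≤ i ∧ i ≤ n) → e i = 0
  c_zero : ∀ i j, ¬ DnAdj n i j → c i j = 0
  l_zero : ∀ i, ¬ (1 ≤ i ∧ i ≤ n) → l i = 0
  idem : ∀ i, e i * e i = e i
  orth : ∀ i j, i ≠ j → e i * e j = 0
  sum_one : ∑ i ∈ Finset.Icc 1 n, e i = 1
  c_comp : ∀ i j, e i * c i j = c i j ∧ c i j * e j = c i j
  l_comp : ∀ i, e i * l i = l i ∧ l i * e i = l i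
  g_internal : DirectSum.IsInternal g
  g_one : (1 : T) ∈ g 0
  g_mul : ∀ (d₁ d₂ : ℤ) (x y : T), x ∈ g d₁ → y ∈ g d₂ → x * y ∈ g (d₁ + d₂)
  w_internal : DirectSum.IsInternal w
  w_one : (1 : T) ∈ w 0
  w_mul : ∀ (d₁ d₂ : ℕ) (x y : T), x ∈ w d₁ → y ∈ w d₂ → x * y ∈ w (d₁ + d₂)
  e_g : ∀ i, e i ∈ g 0
  c_g : ∀ i j, c i j ∈ g 0
  l_g : ∀ i, l i ∈ g (-1)
  e_w : ∀ i, e i ∈ w 0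
  c_w : ∀ i j, c i j ∈ w 1
  l_w : ∀ i, l i ∈ w 1
  free : ∀ (S : Type) [Ring S] [Algebra K S] (ε : ℕ → S) (γ : ℕ → ℕ → S) (δ : ℕ → S),
    (∀ i, ¬ (1 ≤ i ∧ i ≤ n) → ε i = 0) →
    (∀ i j, ¬ DnAdj n i j → γ i j = 0) →
    (∀ i, ¬ (1 ≤ i ∧ i ≤ n) → δ i = 0) →
    (∀ i, ε i * ε i = ε i) →
    (∀ i j, i ≠ j → ε i * ε j = 0) →
    (∑ i ∈ Finset.Icc 1 n, ε i = 1) →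
    (∀ i j, ε i * γ i j = γ i j ∧ γ i j * ε j = γ i j) →
    (∀ i, ε i * δ i = δ i ∧ δ i * ε i = δ i) →
    ∃! f : T →ₐ[K] S, (∀ i, f (e i) = ε i) ∧ (∀ i j, f (c i j) = γ i j) ∧
      (∀ i, f (l i) = δ i)

attribute [instance] DnPres.ringT DnPres.algT

/-- The Koszul sign `(−1)^d` for `d : ℤ`, as an integer. -/
def negOneZ (d : ℤ) : ℤ := (-1) ^ d.natAbs

/-- `IsDnDiff P D q` asserts that `D` is the differential of the Chekanov–Eliashberg
DG-algebra of `Λ_{D_n}` when `q = 1`, and of the Ginzburg DG-algebra of the `D_n` quiver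
when `q = 0`: a square-zero degree `+1` graded `K`-linear derivation with `D e = 0`,
`D c = 0`, the listed values on the generators `ℓ i`, and the quartic term
`− c_{31}c_{13}c_{32}c_{23}` in `D ℓ₃` scaled by `q`. -/
def IsDnDiff {K : Type} [Field K] {n : ℕ} (P : DnPres K n)
    (D : P.T →ₗ[K] P.T) (q : K) : Prop :=
  (∀ x, D (D x) = 0) ∧
  (∀ (d : ℤ) (x : P.T), x ∈ P.g d → D x ∈ P.g (d + 1)) ∧
  (∀ (d : ℤ) (x : P.T), x ∈ P.g d → ∀ y : P.T,
    D (x * y) = D x * y + negOneZ d • (x * D y)) ∧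
  (∀ i, D (P.e i) = 0) ∧
  (∀ i j, D (P.c i j) = 0) ∧
  D (P.l 1) = P.c 1 3 * P.c 3 1 ∧
  D (P.l 2) = P.c 2 3 * P.c 3 2 ∧
  D (P.l 3) = -(P.c 3 1 * P.c 1 3) - P.c 3 2 * P.c 2 3 + P.c 3 4 * P.c 4 3
      - q • (P.c 3 1 * P.c 1 3 * P.c 3 2 * P.c 2 3) ∧
  (∀ i, 4 ≤ i → i + 1 ≤ n →
    D (P.l i) = -(P.c i (i-1) * P.c (i-1) i) + P.c i (i+1) * P.c (i+1) i) ∧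
  D (P.l n) = -(P.c n (n-1) * P.c (n-1) n)

/-- The decreasing word-length filtration `F^p ⊆ T`: the span of the graded pieces of
word length at least `p`. -/
def wFiltr {K : Type} [Field K] {n : ℕ} (P : DnPres K n) (p : ℕ) : Submodule K P.T :=
  ⨆ (q : ℕ) (_ : p ≤ q), P.w q

/-!
Let `Λ : T → K` sum the coefficients of the twelve rotations of the quartic cycles
`c₃ₐ cₐ₃ c₃ᵦ cᵦ₃` (`a ≠ b` neighbours of the central vertex `3`). Path words form a basis of `T`
(`T` acts on the span of paths by left concatenation), so `Λ` is well defined, and since this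
set of words is closed under rotation and consists of closed paths, `Λ` is a trace.

For `ℓ = ℓ₁ + ℓ₂ + ℓ₃ + ℓ₄`, `d ℓ` is a sum of commutators `[c_{ij}, c_{ji}]`, and a trace kills
`φ [x, y] = [φ x, y] + [x, φ y]`; hence `Λ (φ (d ℓ)) = 0`. In characteristic `2` the
differential is `d ℓᵢ = ∑ⱼ cᵢⱼ cⱼᵢ`, and `Λ ∘ d` vanishes in degree `−1`: for a word `a ℓᵢ b`,
`Λ (d (a ℓᵢ b)) = Λ (b a · d ℓᵢ)`, and appending the words of `d ℓᵢ` to any word produces an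
even number of the twelve cycles. As `φ ℓ` has degree `−1`, applying `Λ` to
`d (φ ℓ) − φ (d ℓ) = d₃ ℓ = −c₃₁c₁₃c₃₂c₂₃` gives `0 = −1`.
-/

theorem List.exists_eq_append_cons_of_countP_eq_one {α : Type*} {p : α → Bool} {L : List α}
    (h : L.countP p = 1) :
    ∃ A a B, L = A ++ a :: B ∧ p a ∧ A.countP p = 0 ∧ B.countP p = 0 := by
  induction L with
  | nil => simp at h
  | cons b L ih =>
    rw [List.countP_cons] at h
    by_cases hb : p b
    · exact ⟨[], b, L, rfl, hb, rfl, by simpa [hb] using h⟩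
    · obtain ⟨A, a, B, rfl, ha, hA, hB⟩ := ih (by simpa [hb] using h)
      exact ⟨b :: A, a, B, rfl, ha, by simp [hA, hb], hB⟩

theorem iSupIndep.inf_iSup_le {ι α : Type*} [CompleteLattice α] [IsModularLattice α]
    {g N : ι → α} (hg : iSupIndep g) (hN : ∀ i, N i ≤ g i) (m : ι) :
    g m ⊓ ⨆ i, N i ≤ N m := by
  have hsplit : ⨆ i, N i ≤ N m ⊔ ⨆ (i) (_ : i ≠ m), g i := by
    refine iSup_le fun i => ?_
    by_cases h : i = m
    · exact h ▸ le_sup_left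
    · exact le_sup_of_le_right (le_iSup₂_of_le i h (hN i))
  calc g m ⊓ ⨆ i, N i ≤ (N m ⊔ ⨆ (i) (_ : i ≠ m), g i) ⊓ g m := by
        rw [inf_comm]; exact inf_le_inf_right _ hsplit
    _ = N m := by rw [sup_inf_assoc_of_le _ (hN m), (hg m).symm.eq_bot, sup_bot_eq]

theorem map_derivation_commutator_eq_zero {A M : Type*} [Ring A] [AddCommGroup M] (τ : A →+ M)
    (hτ : ∀ x y, τ (x * y) = τ (y * x)) (φ : A →+ A) (hφ : ∀ x y, φ (x * y) = φ x * y + x * φ y)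
    (a b : A) : τ (φ (a * b - b * a)) = 0 := by
  rw [map_sub, hφ, hφ, map_sub, map_add, map_add, hτ (φ a) b, hτ a (φ b)]
  abel

namespace Dn

/-- `arrow i j` stands for `c i j` and `loop i` for `ℓ i`. -/
inductive Letter : Type
  | arrow : ℕ → ℕ → Letter
  | loop : ℕ → Letter
  deriving DecidableEq

instance (n i j : ℕ) : Decidable (DnAdj n i j) := by
  unfold DnAdj; infer_instance

namespace Letter

def src : Letter → ℕ
  | arrow i _ => i
  | loop i => i

def tgt : Letter → ℕ
  | arrow _ j => j
  | loop i => i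

def isLoop : Letter → Bool
  | arrow _ _ => false
  | loop _ => true

/-- `DnAdj n 3 1` holds even for `n < 3`; the bounds keep the arrows inside the vertex set. -/
def IsGen (n : ℕ) : Letter → Prop
  | arrow i j => DnAdj n i j ∧ i ≤ n ∧ j ≤ n
  | loop i => 1 ≤ i ∧ i ≤ n

instance (n : ℕ) : DecidablePred (IsGen n) := fun a => by
  cases a <;> (unfold IsGen; infer_instance)

lemma IsGen.src_mem {n : ℕ} {a : Letter} (h : a.IsGen n) : 1 ≤ a.src ∧ a.src ≤ n := by
  cases a with
  | arrow i j => simp only [IsGen, DnAdj] at h; simp only [src]; omega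
  | loop i => exact h

lemma IsGen.tgt_mem {n : ℕ} {a : Letter} (h : a.IsGen n) : 1 ≤ a.tgt ∧ a.tgt ≤ n := by
  cases a with
  | arrow i j => simp only [IsGen, DnAdj] at h; simp only [tgt]; omega
  | loop i => exact h

end Letter

def IsPath (n : ℕ) : ℕ → List Letter → Prop
  | v, [] => 1 ≤ v ∧ v ≤ n
  | v, a :: L => a.IsGen n ∧ a.src = v ∧ IsPath n a.tgt L

instance (n : ℕ) : ∀ v L, Decidable (IsPath n v L)
  | _, [] => by unfold IsPath; infer_instance
  | v, a :: L => by
      have := instDecidableIsPath n a.tgt L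
      unfold IsPath; infer_instance

def pathEnd : ℕ → List Letter → ℕ
  | v, [] => v
  | _, a :: L => pathEnd a.tgt L

variable {n : ℕ}

lemma isPath_nil {v : ℕ} : IsPath n v [] ↔ 1 ≤ v ∧ v ≤ n := Iff.rfl

lemma IsPath.start_mem {v : ℕ} {L : List Letter} (h : IsPath n v L) : 1 ≤ v ∧ v ≤ n := by
  induction L generalizing v with
  | nil => exact h
  | cons a L ih =>
    obtain ⟨ha, rfl, -⟩ := h
    exact ha.src_mem

lemma IsPath.end_mem {v : ℕ} {L : List Letter} (h : IsPath n v L) :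
    1 ≤ pathEnd v L ∧ pathEnd v L ≤ n := by
  induction L generalizing v with
  | nil => exact h
  | cons a L ih => exact ih h.2.2

lemma pathEnd_append (v : ℕ) (L L' : List Letter) :
    pathEnd v (L ++ L') = pathEnd (pathEnd v L) L' := by
  induction L generalizing v with
  | nil => rfl
  | cons a L ih => exact ih a.tgt

lemma isPath_append {v : ℕ} {L L' : List Letter} :
    IsPath n v (L ++ L') ↔ IsPath n v L ∧ IsPath n (pathEnd v L) L' := by
  induction L generalizing v with
  | nil => exact ⟨fun h => ⟨h.start_mem, h⟩, And.right⟩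
  | cons a L ih =>
    simp only [List.cons_append, IsPath, pathEnd, ih, and_assoc]

end Dn

namespace DnPres

open Dn

variable {K : Type} [Field K] {n : ℕ} (P : DnPres K n)

def letter : Letter → P.T
  | .arrow i j => P.c i j
  | .loop i => P.l i

def word (v : ℕ) (L : List Letter) : P.T := P.e v * (L.map P.letter).prod

def words : Set P.T := {x | ∃ v L, IsPath n v L ∧ P.word v L = x}

lemma e_mul_letter (a : Letter) : P.e a.src * P.letter a = P.letter a := by
  cases a with
  | arrow i j => exact (P.c_comp i j).1
  | loop i => exact (P.l_comp i).1

lemma letter_mul_e (a : Letter) : P.letter a * P.e a.tgt = P.letter a := by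
  cases a with
  | arrow i j => exact (P.c_comp i j).2
  | loop i => exact (P.l_comp i).2

lemma word_nil (v : ℕ) : P.word v [] = P.e v := mul_one _

lemma word_cons (a : Letter) (L : List Letter) :
    P.word a.src (a :: L) = P.letter a * P.word a.tgt L := by
  rw [word, word, List.map_cons, List.prod_cons, ← mul_assoc, e_mul_letter, ← mul_assoc,
    letter_mul_e]

lemma word_singleton (a : Letter) : P.word a.src [a] = P.letter a := by
  rw [word_cons, word_nil, letter_mul_e]

lemma word_arrow_pair (i j : ℕ) : P.word i [.arrow i j, .arrow j i] = P.c i j * P.c j i := by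
  simp [word, letter, ← mul_assoc, (P.c_comp i j).1]

lemma e_mul_e (i j : ℕ) : P.e i * P.e j = if j = i then P.e i else 0 := by
  split_ifs with h
  · rw [h, P.idem]
  · exact P.orth i j (Ne.symm h)

lemma word_mul_e {v : ℕ} {L : List Letter} (h : IsPath n v L) (u : ℕ) :
    P.word v L * P.e u = if u = pathEnd v L then P.word v L else 0 := by
  induction L generalizing v with
  | nil => rw [word_nil, e_mul_e]; rfl
  | cons a L ih =>
    obtain ⟨-, rfl, hL⟩ := h
    rw [word_cons, mul_assoc, ih hL, pathEnd]
    split_ifs <;> simp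

lemma word_mul_word {v : ℕ} {L : List Letter} (h : IsPath n v L) (u : ℕ) (L' : List Letter) :
    P.word v L * P.word u L' = if u = pathEnd v L then P.word v (L ++ L') else 0 := by
  rw [show P.word u L' = P.e u * (L'.map P.letter).prod from rfl, ← mul_assoc, word_mul_e P h]
  split_ifs
  · rw [word, word, List.map_append, List.prod_append, mul_assoc]
  · rw [zero_mul]

lemma word_mem_g (v : ℕ) (L : List Letter) :
    P.word v L ∈ P.g (-(L.countP Letter.isLoop : ℤ)) := by
  suffices (L.map P.letter).prod ∈ P.g (-(L.countP Letter.isLoop : ℤ)) by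
    simpa [word] using P.g_mul _ _ _ _ (P.e_g v) this
  induction L with
  | nil => exact P.g_one
  | cons a L ih =>
    rw [List.map_cons, List.prod_cons, List.countP_cons]
    cases a with
    | arrow i j => simpa [Letter.isLoop, letter] using P.g_mul _ _ _ _ (P.c_g i j) ih
    | loop i =>
      convert (P.g_mul _ _ _ _ (P.l_g i) ih : P.letter (.loop i) * _ ∈ _) using 2
      simp only [Letter.isLoop]
      push_cast
      ring

lemma subalgebra_eq_top (A : Subalgebra K P.T) (he : ∀ i, P.e i ∈ A) (hc : ∀ i j, P.c i j ∈ A)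
    (hl : ∀ i, P.l i ∈ A) : A = ⊤ := by
  obtain ⟨ι, -, hι⟩ := P.free P.T P.e P.c P.l P.e_zero P.c_zero P.l_zero P.idem P.orth
    P.sum_one P.c_comp P.l_comp
  obtain ⟨f, ⟨hfe, hfc, hfl⟩, -⟩ := P.free A (fun i => ⟨P.e i, he i⟩)
    (fun i j => ⟨P.c i j, hc i j⟩) (fun i => ⟨P.l i, hl i⟩)
    (fun i h => Subtype.ext (P.e_zero i h)) (fun i j h => Subtype.ext (P.c_zero i j h))
    (fun i h => Subtype.ext (P.l_zero i h)) (fun i => Subtype.ext (P.idem i))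
    (fun i j h => Subtype.ext (P.orth i j h)) (Subtype.ext (by push_cast; exact P.sum_one))
    (fun i j => ⟨Subtype.ext (P.c_comp i j).1, Subtype.ext (P.c_comp i j).2⟩)
    (fun i => ⟨Subtype.ext (P.l_comp i).1, Subtype.ext (P.l_comp i).2⟩)
  have hid : AlgHom.id K P.T = ι := hι _ ⟨fun _ => rfl, fun _ _ => rfl, fun _ => rfl⟩
  have hval : A.val.comp f = ι := hι _
    ⟨fun i => congrArg Subtype.val (hfe i), fun i j => congrArg Subtype.val (hfc i j),
      fun i => congrArg Subtype.val (hfl i)⟩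
  refine eq_top_iff.2 fun x _ => ?_
  have hx : A.val.comp f x = x := by rw [hval, ← hid]; rfl
  exact hx ▸ (f x).2

lemma letter_mem_span_words (a : Letter) : P.letter a ∈ Submodule.span K P.words := by
  by_cases ha : a.IsGen n
  · exact Submodule.subset_span ⟨a.src, [a], ⟨ha, rfl, ha.tgt_mem⟩, P.word_singleton a⟩
  · suffices P.letter a = 0 by rw [this]; exact Submodule.zero_mem _
    cases a with
    | arrow i j =>
      by_cases hadj : DnAdj n i j
      · have hout : ¬(1 ≤ i ∧ i ≤ n) ∨ ¬(1 ≤ j ∧ j ≤ n) := by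
          simp only [Letter.IsGen, DnAdj] at ha hadj; omega
        rcases hout with hi | hj
        · rw [letter, ← (P.c_comp i j).1, P.e_zero i hi, zero_mul]
        · rw [letter, ← (P.c_comp i j).2, P.e_zero j hj, mul_zero]
      · exact P.c_zero i j hadj
    | loop i => exact P.l_zero i ha

lemma span_words : Submodule.span K P.words = ⊤ := by
  have hmul : ∀ x y, x ∈ Submodule.span K P.words → y ∈ Submodule.span K P.words →
      x * y ∈ Submodule.span K P.words := by
    intro x y hx hy
    have := Submodule.mul_mem_mul hx hy
    rw [Submodule.span_mul_span] at this
    refine Submodule.span_le.2 ?_ this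
    rintro _ ⟨_, ⟨v, L, hL, rfl⟩, _, ⟨u, L', hL', rfl⟩, rfl⟩
    dsimp only
    rw [word_mul_word P hL]
    split_ifs with hu
    · exact Submodule.subset_span ⟨v, L ++ L', isPath_append.2 ⟨hL, hu ▸ hL'⟩, rfl⟩
    · exact Submodule.zero_mem _
  have he : ∀ i, P.e i ∈ Submodule.span K P.words := fun i => by
    by_cases hi : 1 ≤ i ∧ i ≤ n
    · exact Submodule.subset_span ⟨i, [], hi, P.word_nil i⟩
    · rw [P.e_zero i hi]; exact Submodule.zero_mem _
  have hone : (1 : P.T) ∈ Submodule.span K P.words :=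
    P.sum_one ▸ Submodule.sum_mem _ fun i _ => he i
  have := P.subalgebra_eq_top ((Submodule.span K P.words).toSubalgebra hone hmul) he
    (fun i j => P.letter_mem_span_words (.arrow i j)) (fun i => P.letter_mem_span_words (.loop i))
  refine eq_top_iff.2 fun x _ => ?_
  have hx : x ∈ (Submodule.span K P.words).toSubalgebra hone hmul := this ▸ Algebra.mem_top
  exact hx

end DnPres

namespace Dn

@[ext]
structure Path (n : ℕ) where
  start : ℕ
  letters : List Letter
  isPath : IsPath n start letters

variable (K : Type) [Field K] (n : ℕ)

noncomputable def idemOp (i : ℕ) : Module.End K (Path n →₀ K) :=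
  Finsupp.lsum K fun p => if p.start = i then Finsupp.lsingle p else 0

noncomputable def letterOp (a : Letter) : Module.End K (Path n →₀ K) :=
  Finsupp.lsum K fun p =>
    if h : a.IsGen n ∧ a.tgt = p.start then
      Finsupp.lsingle ⟨a.src, a :: p.letters, h.1, rfl, h.2 ▸ p.isPath⟩
    else 0

noncomputable def vacuum : Path n →₀ K :=
  ∑ u ∈ (Finset.Icc 1 n).attach, Finsupp.single ⟨u.1, [], isPath_nil.2 (Finset.mem_Icc.1 u.2)⟩ 1

variable {K n}

lemma idemOp_single (i : ℕ) (p : Path n) (b : K) :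
    idemOp K n i (Finsupp.single p b) = if p.start = i then Finsupp.single p b else 0 := by
  rw [idemOp, Finsupp.lsum_single]
  split_ifs <;> simp

lemma letterOp_single (a : Letter) (p : Path n) (b : K) :
    letterOp K n a (Finsupp.single p b) =
      if h : a.IsGen n ∧ a.tgt = p.start then
        Finsupp.single ⟨a.src, a :: p.letters, h.1, rfl, h.2 ▸ p.isPath⟩ b
      else 0 := by
  rw [letterOp, Finsupp.lsum_single]
  split_ifs <;> simp

lemma ext_single {f g : Module.End K (Path n →₀ K)}
    (h : ∀ p b, f (Finsupp.single p b) = g (Finsupp.single p b)) : f = g :=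
  Finsupp.lhom_ext h

lemma idemOp_eq_zero {i : ℕ} (hi : ¬(1 ≤ i ∧ i ≤ n)) : idemOp K n i = 0 :=
  ext_single fun p b => by
    rw [idemOp_single, if_neg (by rintro rfl; exact hi p.isPath.start_mem), LinearMap.zero_apply]

lemma letterOp_eq_zero {a : Letter} (ha : ¬a.IsGen n) : letterOp K n a = 0 :=
  ext_single fun p b => by
    rw [letterOp_single, dif_neg fun h => ha h.1, LinearMap.zero_apply]

lemma idemOp_mul_idemOp (i j : ℕ) :
    idemOp K n i * idemOp K n j = if i = j then idemOp K n i else 0 :=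
  ext_single fun p b => by
    rw [Module.End.mul_apply]
    by_cases hi : i = j
    · subst hi; by_cases hj : p.start = i <;> simp [hj, idemOp_single]
    · by_cases hj : p.start = j <;> simp [hj, hi, idemOp_single, Ne.symm hi]

lemma sum_idemOp : ∑ i ∈ Finset.Icc 1 n, idemOp K n i = 1 :=
  ext_single fun p b => by
    rw [LinearMap.sum_apply]
    simp_rw [idemOp_single]
    rw [Finset.sum_ite_eq, if_pos (Finset.mem_Icc.2 p.isPath.start_mem), Module.End.one_apply]

lemma idemOp_mul_letterOp (a : Letter) : idemOp K n a.src * letterOp K n a = letterOp K n a :=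
  ext_single fun p b => by
    rw [Module.End.mul_apply, letterOp_single]
    split_ifs
    · rw [idemOp_single, if_pos rfl]
    · rw [map_zero]

lemma letterOp_mul_idemOp (a : Letter) : letterOp K n a * idemOp K n a.tgt = letterOp K n a :=
  ext_single fun p b => by
    rw [Module.End.mul_apply, idemOp_single, letterOp_single]
    split_ifs with h1 h2 h2
    · rw [letterOp_single, dif_pos h2]
    · rw [letterOp_single, dif_neg h2]
    · exact absurd h2.2.symm h1
    · rw [map_zero]

end Dn

namespace DnPres

open Dn

variable {K : Type} [Field K] {n : ℕ} (P : DnPres K n)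

lemma exists_pathRep : ∃ f : P.T →ₐ[K] Module.End K (Path n →₀ K),
    (∀ i, f (P.e i) = idemOp K n i) ∧ (∀ i j, f (P.c i j) = letterOp K n (.arrow i j)) ∧
      (∀ i, f (P.l i) = letterOp K n (.loop i)) :=
  (P.free _ (idemOp K n) (fun i j => letterOp K n (.arrow i j)) (fun i => letterOp K n (.loop i))
    (fun _ hi => idemOp_eq_zero hi)
    (fun i j h => letterOp_eq_zero (a := .arrow i j) fun ha => h ha.1)
    (fun i hi => letterOp_eq_zero (a := .loop i) hi)
    (fun i => by simpa using idemOp_mul_idemOp (K := K) i i)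
    (fun i j h => by simpa [h] using idemOp_mul_idemOp (K := K) i j) sum_idemOp
    (fun i j => ⟨idemOp_mul_letterOp (.arrow i j), letterOp_mul_idemOp (.arrow i j)⟩)
    (fun i => ⟨idemOp_mul_letterOp (.loop i), letterOp_mul_idemOp (.loop i)⟩)).exists

noncomputable def pathRep : P.T →ₐ[K] Module.End K (Path n →₀ K) := P.exists_pathRep.choose

lemma pathRep_e (i : ℕ) : P.pathRep (P.e i) = idemOp K n i := P.exists_pathRep.choose_spec.1 i

lemma pathRep_letter (a : Letter) : P.pathRep (P.letter a) = letterOp K n a := by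
  cases a with
  | arrow i j => exact P.exists_pathRep.choose_spec.2.1 i j
  | loop i => exact P.exists_pathRep.choose_spec.2.2 i

lemma pathRep_word_single {v : ℕ} {L : List Letter} (h : IsPath n v L) {u : ℕ}
    (hu : IsPath n u []) :
    P.pathRep (P.word v L) (Finsupp.single ⟨u, [], hu⟩ 1) =
      if u = pathEnd v L then Finsupp.single ⟨v, L, h⟩ 1 else 0 := by
  induction L generalizing v with
  | nil =>
    rw [word_nil, pathRep_e, idemOp_single]
    split_ifs with h1 h2 h2
    · subst h1; rfl
    · exact absurd h1 h2
    · exact absurd h2 h1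
    · rfl
  | cons a L ih =>
    obtain ⟨ha, rfl, hL⟩ := h
    rw [word_cons, map_mul, Module.End.mul_apply, ih hL, pathEnd]
    split_ifs
    · rw [pathRep_letter, letterOp_single, dif_pos ⟨ha, rfl⟩]
    · rw [map_zero]

lemma pathRep_word_vacuum {v : ℕ} {L : List Letter} (h : IsPath n v L) :
    P.pathRep (P.word v L) (vacuum K n) = Finsupp.single ⟨v, L, h⟩ 1 := by
  rw [vacuum, map_sum, Finset.sum_eq_single_of_mem ⟨pathEnd v L, Finset.mem_Icc.2 h.end_mem⟩
    (Finset.mem_attach _ _)]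
  · rw [pathRep_word_single P h, if_pos rfl]
  · rintro u - hu
    rw [pathRep_word_single P h, if_neg fun h' => hu (Subtype.ext h')]

noncomputable def pathFunctional (χ : List Letter → K) : P.T →ₗ[K] K :=
  Finsupp.linearCombination K (fun p : Path n => χ p.letters) ∘ₗ
    LinearMap.applyₗ (vacuum K n) ∘ₗ P.pathRep.toLinearMap

lemma pathFunctional_word (χ : List Letter → K) {v : ℕ} {L : List Letter} (h : IsPath n v L) :
    P.pathFunctional χ (P.word v L) = χ L := by
  simp [pathFunctional, pathRep_word_vacuum P h]

lemma pathFunctional_word_mul_word (χ : List Letter → K) {v u : ℕ} {L L' : List Letter}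
    (h : IsPath n v L) (h' : IsPath n u L') :
    P.pathFunctional χ (P.word v L * P.word u L') =
      if u = pathEnd v L then χ (L ++ L') else 0 := by
  rw [word_mul_word P h]
  split_ifs with hu
  · exact P.pathFunctional_word χ (isPath_append.2 ⟨h, hu ▸ h'⟩)
  · exact map_zero _

theorem pathFunctional_mul_comm (χ : List Letter → K)
    (hrot : ∀ L L', χ (L ++ L') = χ (L' ++ L))
    (hclosed : ∀ v L, IsPath n v L → χ L ≠ 0 → pathEnd v L = v) (x y : P.T) :
    P.pathFunctional χ (x * y) = P.pathFunctional χ (y * x) := by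
  have vanish : ∀ {v u L L'}, IsPath n v L → IsPath n u L' → u = pathEnd v L →
      v ≠ pathEnd u L' → χ (L ++ L') = 0 := fun {v u L L'} h h' hu hv => by
    by_contra hne
    exact hv (by
      rw [← hclosed v _ (isPath_append.2 ⟨h, hu ▸ h'⟩) hne, pathEnd_append, hu])
  have hwords : ∀ a ∈ P.words, ∀ b ∈ P.words,
      P.pathFunctional χ (a * b) = P.pathFunctional χ (b * a) := by
    rintro _ ⟨v, L, h, rfl⟩ _ ⟨u, L', h', rfl⟩
    rw [pathFunctional_word_mul_word P χ h h', pathFunctional_word_mul_word P χ h' h]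
    by_cases hu : u = pathEnd v L <;> by_cases hv : v = pathEnd u L'
    · rw [if_pos hu, if_pos hv, hrot]
    · rw [if_pos hu, if_neg hv, vanish h h' hu hv]
    · rw [if_neg hu, if_pos hv, vanish h' h hv hu]
    · rw [if_neg hu, if_neg hv]
  let B : P.T →ₗ[K] P.T →ₗ[K] K := (LinearMap.mul K P.T).compr₂ (P.pathFunctional χ)
  have hB : B = B.flip := LinearMap.ext_on P.span_words fun a ha =>
    LinearMap.ext_on P.span_words fun b hb => hwords a ha b hb
  exact LinearMap.congr_fun₂ hB x y

lemma mem_span_words_of_mem_g {m : ℤ} {x : P.T} (hx : x ∈ P.g m) :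
    x ∈ Submodule.span K
      {y | ∃ v L, IsPath n v L ∧ -(L.countP Letter.isLoop : ℤ) = m ∧ P.word v L = y} := by
  let N : ℤ → Submodule K P.T := fun k => Submodule.span K
    {y | ∃ v L, IsPath n v L ∧ -(L.countP Letter.isLoop : ℤ) = k ∧ P.word v L = y}
  have hN : ∀ k, N k ≤ P.g k := fun k => Submodule.span_le.2 <| by
    rintro _ ⟨v, L, -, rfl, rfl⟩
    exact P.word_mem_g v L
  have htop : ⨆ k, N k = ⊤ := by
    refine eq_top_iff.2 (P.span_words ▸ Submodule.span_le.2 ?_)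
    rintro _ ⟨v, L, h, rfl⟩
    exact Submodule.mem_iSup_of_mem _ (Submodule.subset_span ⟨v, L, h, rfl, rfl⟩)
  exact P.g_internal.submodule_iSupIndep.inf_iSup_le hN m ⟨hx, htop ▸ Submodule.mem_top⟩

end DnPres

namespace IsDnDiff

open Dn

variable {K : Type} [Field K] {n : ℕ} {P : DnPres K n} {d : P.T →ₗ[K] P.T} {q : K}

lemma map_mul_of_mem_g_zero (hd : IsDnDiff P d q) {x : P.T} (hx : x ∈ P.g 0)
    (y : P.T) : d (x * y) = d x * y + x * d y := by
  rw [hd.2.2.1 0 x hx y]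
  simp [negOneZ]

lemma map_loop_mul (hd : IsDnDiff P d q) (i : ℕ) (y : P.T) :
    d (P.l i * y) = d (P.l i) * y - P.l i * d y := by
  rw [hd.2.2.1 (-1) _ (P.l_g i) y]
  simp [negOneZ, sub_eq_add_neg]

lemma map_word_of_countP_eq_zero (hd : IsDnDiff P d q) (v : ℕ) {L : List Letter}
    (hL : L.countP Letter.isLoop = 0) : d (P.word v L) = 0 := by
  suffices d (L.map P.letter).prod = 0 by
    rw [DnPres.word, hd.map_mul_of_mem_g_zero (P.e_g v), hd.2.2.2.1, this, zero_mul, mul_zero,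
      add_zero]
  induction L with
  | nil =>
    rw [List.map_nil, List.prod_nil, ← P.sum_one, map_sum]
    exact Finset.sum_eq_zero fun i _ => hd.2.2.2.1 i
  | cons a L ih =>
    cases a with
    | arrow i j =>
      rw [List.map_cons, List.prod_cons, DnPres.letter, hd.map_mul_of_mem_g_zero (P.c_g i j),
        hd.2.2.2.2.1, ih (by simpa [Letter.isLoop] using hL)]
      simp
    | loop i => simp [Letter.isLoop] at hL

lemma map_word_loop (hd : IsDnDiff P d q) {v i : ℕ} {A B : List Letter}
    (hA : A.countP Letter.isLoop = 0) (hB : B.countP Letter.isLoop = 0)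
    (h : IsPath n v (A ++ .loop i :: B)) :
    d (P.word v (A ++ .loop i :: B)) = P.word v A * d (P.l i) * P.word i B := by
  obtain ⟨hvA, -, hi, -⟩ := isPath_append.1 h
  have hsplit : P.word v (A ++ .loop i :: B) = P.word v A * (P.l i * P.word i B) := by
    rw [show P.l i * P.word i B = P.word i (.loop i :: B) from (P.word_cons (.loop i) B).symm,
      P.word_mul_word hvA, if_pos (show i = pathEnd v A from hi)]
  have hA0 : P.word v A ∈ P.g 0 := by simpa [hA] using P.word_mem_g v A
  rw [hsplit, hd.map_mul_of_mem_g_zero hA0, hd.map_word_of_countP_eq_zero v hA, zero_mul,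
    zero_add, hd.map_loop_mul, hd.map_word_of_countP_eq_zero i hB, mul_zero, sub_zero, mul_assoc]

end IsDnDiff

namespace Dn

def relationWords (n i : ℕ) : List (List Letter) :=
  ((List.range (n + 1)).filter fun j => DnAdj n i j).map fun j => [.arrow i j, .arrow j i]

def quarticCycles : List (List Letter) :=
  [(1, 2), (1, 4), (2, 4)].flatMap fun (a, b) =>
    (List.range 4).map ([.arrow 3 a, .arrow a 3, .arrow 3 b, .arrow b 3].rotate ·)

lemma rotate_mem_quarticCycles {M : List Letter} (hM : M ∈ quarticCycles) (k : ℕ) :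
    M.rotate k ∈ quarticCycles := by
  simp only [quarticCycles, List.mem_flatMap, List.mem_map, List.mem_range] at hM ⊢
  obtain ⟨ab, hab, j, -, rfl⟩ := hM
  refine ⟨ab, hab, (j + k) % 4, Nat.mod_lt _ (by norm_num), ?_⟩
  rw [List.rotate_rotate]
  exact List.rotate_mod _ _

lemma length_of_mem_quarticCycles {M : List Letter} (hM : M ∈ quarticCycles) : M.length = 4 := by
  simp only [quarticCycles, List.mem_flatMap, List.mem_map, List.mem_range] at hM
  obtain ⟨ab, -, j, -, rfl⟩ := hM
  simp

lemma pathEnd_of_mem_quarticCycles {v : ℕ} {M : List Letter} (hM : M ∈ quarticCycles)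
    (h : IsPath 4 v M) : pathEnd v M = v := by
  obtain ⟨hv1, hv4⟩ := h.start_mem
  revert M
  interval_cases v <;> decide

lemma even_countP_relationWords {i : ℕ} (hi : i ≤ 4) (U : List Letter) :
    Even ((relationWords 4 i).countP fun D => U ++ D ∈ quarticCycles) := by
  -- `U ++ D` can only be one of the cycles if `U` is the first half of it.
  by_cases hU : U ∈ quarticCycles.map (List.take 2)
  · obtain ⟨M, hM, rfl⟩ := List.mem_map.1 hU
    revert M
    interval_cases i <;> decide
  · suffices (relationWords 4 i).countP (fun D => U ++ D ∈ quarticCycles) = 0 by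
      rw [this]; exact ⟨0, rfl⟩
    refine List.countP_eq_zero.2 fun D hD hUD => hU (List.mem_map.2 ⟨_, of_decide_eq_true hUD, ?_⟩)
    obtain ⟨j, -, rfl⟩ := List.mem_map.1 hD
    have := length_of_mem_quarticCycles (of_decide_eq_true hUD)
    simp only [List.length_append, List.length_cons, List.length_nil] at this
    exact List.take_left' (by omega)

end Dn

namespace DnPres

open Dn

variable {K : Type} [Field K] (P : DnPres K 4)

noncomputable def quarticTrace : P.T →ₗ[K] K :=
  P.pathFunctional fun L => if L ∈ quarticCycles then 1 else 0

lemma quarticTrace_word {v : ℕ} {L : List Letter} (h : IsPath 4 v L) :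
    P.quarticTrace (P.word v L) = if L ∈ quarticCycles then 1 else 0 :=
  P.pathFunctional_word _ h

lemma quarticTrace_mul_comm (x y : P.T) : P.quarticTrace (x * y) = P.quarticTrace (y * x) := by
  refine P.pathFunctional_mul_comm _ (fun L L' => ?_) (fun v L h hL => ?_) x y
  · have rot : ∀ L L' : List Letter, L ++ L' ∈ quarticCycles → L' ++ L ∈ quarticCycles :=
      fun L L' h => List.rotate_append_length_eq L L' ▸ rotate_mem_quarticCycles h L.length
    by_cases h : L ++ L' ∈ quarticCycles
    · rw [if_pos h, if_pos (rot L L' h)]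
    · rw [if_neg h, if_neg fun h' => h (rot L' L h')]
  · exact pathEnd_of_mem_quarticCycles (by_contra fun hM => hL (if_neg hM)) h

lemma quarticTrace_word_mul_sum {v i : ℕ} {U : List Letter} (hU : IsPath 4 v U)
    {Ds : List (List Letter)} (hDs : ∀ D ∈ Ds, IsPath 4 i D) :
    P.quarticTrace (P.word v U * (Ds.map (P.word i)).sum) =
      if i = pathEnd v U then (Ds.countP fun D => U ++ D ∈ quarticCycles : K) else 0 := by
  induction Ds with
  | nil => simp
  | cons D Ds ih =>
    rw [List.map_cons, List.sum_cons, mul_add, map_add, quarticTrace,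
      pathFunctional_word_mul_word P _ hU (hDs D List.mem_cons_self), ← quarticTrace,
      ih fun D' hD' => hDs D' (List.mem_cons_of_mem D hD'), List.countP_cons]
    split_ifs <;> simp_all [add_comm]

lemma quarticTrace_central_cycle :
    P.quarticTrace (P.c 3 1 * P.c 1 3 * P.c 3 2 * P.c 2 3) = 1 := by
  have h : P.c 3 1 * P.c 1 3 * P.c 3 2 * P.c 2 3 =
      P.word 3 [.arrow 3 1, .arrow 1 3, .arrow 3 2, .arrow 2 3] := by
    simp [word, letter, ← mul_assoc, (P.c_comp 3 1).1]
  rw [h, quarticTrace_word P (by decide), if_pos (by decide)]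

end DnPres

namespace IsDnDiff

open Dn

variable {K : Type} [Field K] {P : DnPres K 4} {d : P.T →ₗ[K] P.T}

lemma map_loop_eq_sum_relationWords [CharP K 2] (hd : IsDnDiff P d 0) {i : ℕ}
    (hi : 1 ≤ i ∧ i ≤ 4) :
    d (P.l i) = ((relationWords 4 i).map (P.word i)).sum := by
  obtain ⟨-, -, -, -, -, h1, h2, h3, -, h4⟩ := hd
  have hneg : ∀ x : P.T, -x = x := fun x => by
    rw [neg_eq_iff_add_eq_zero, ← two_smul K x, CharTwo.two_eq_zero, zero_smul]
  obtain ⟨hi1, hi4⟩ := hi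
  interval_cases i
  · rw [h1, show relationWords 4 1 = [[.arrow 1 3, .arrow 3 1]] by decide]
    simp [P.word_arrow_pair]
  · rw [h2, show relationWords 4 2 = [[.arrow 2 3, .arrow 3 2]] by decide]
    simp [P.word_arrow_pair]
  · rw [h3, show relationWords 4 3 =
      [[.arrow 3 1, .arrow 1 3], [.arrow 3 2, .arrow 2 3], [.arrow 3 4, .arrow 4 3]] by decide]
    simp [P.word_arrow_pair, sub_eq_add_neg, hneg, add_assoc]
  · rw [h4, show relationWords 4 4 = [[.arrow 4 3, .arrow 3 4]] by decide]
    simp [P.word_arrow_pair, hneg]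

lemma quarticTrace_mul_map_loop [CharP K 2] (hd : IsDnDiff P d 0) {i : ℕ}
    (hi : 1 ≤ i ∧ i ≤ 4) (x : P.T) : P.quarticTrace (x * d (P.l i)) = 0 := by
  suffices P.quarticTrace ∘ₗ LinearMap.mulRight K (d (P.l i)) = 0 from
    LinearMap.congr_fun this x
  refine LinearMap.ext_on P.span_words ?_
  rintro _ ⟨v, U, hU, rfl⟩
  have hpaths : ∀ D ∈ relationWords 4 i, IsPath 4 i D := by
    obtain ⟨-, hi4⟩ := hi
    revert i
    decide
  rw [LinearMap.comp_apply, LinearMap.mulRight_apply, LinearMap.zero_apply,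
    hd.map_loop_eq_sum_relationWords hi, P.quarticTrace_word_mul_sum hU hpaths]
  obtain ⟨k, hk⟩ := even_countP_relationWords hi.2 U
  split_ifs
  · rw [hk, Nat.cast_add, ← two_mul, CharTwo.two_eq_zero, zero_mul]
  · rfl

lemma quarticTrace_map_eq_zero_of_mem_g [CharP K 2] (hd : IsDnDiff P d 0) {x : P.T}
    (hx : x ∈ P.g (-1)) : P.quarticTrace (d x) = 0 := by
  have hspan := P.mem_span_words_of_mem_g hx
  clear hx
  induction hspan using Submodule.span_induction with
  | mem y hy =>
    obtain ⟨v, L, hL, hdeg, rfl⟩ := hy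
    obtain ⟨A, a, B, rfl, ha, hA, hB⟩ :=
      List.exists_eq_append_cons_of_countP_eq_one (p := Letter.isLoop) (L := L) (by omega)
    cases a with
    | arrow => simp [Letter.isLoop] at ha
    | loop i =>
      have hi : 1 ≤ i ∧ i ≤ 4 := (isPath_append.1 hL).2.1
      rw [hd.map_word_loop hA hB hL, P.quarticTrace_mul_comm, ← mul_assoc,
        hd.quarticTrace_mul_map_loop hi]
  | zero => rw [map_zero, map_zero]
  | add y z _ _ hy hz => rw [map_add, map_add, hy, hz, add_zero]
  | smul t y _ hy => rw [map_smul, map_smul, hy, smul_zero]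

end IsDnDiff

theorem statement2_general (K : Type) [Field K] (hK : ringChar K = 2)
    (P : DnPres K 4) (d : P.T →ₗ[K] P.T) (hd : IsDnDiff P d 0)
    (d₃ : P.T →ₗ[K] P.T)
    (hd₃l : ∀ i, i ≠ 3 → d₃ (P.l i) = 0)
    (hd₃l3 : d₃ (P.l 3) = -(P.c 3 1 * P.c 1 3 * P.c 3 2 * P.c 2 3)) :
    ¬ ∃ φ : P.T →ₗ[K] P.T,
      -- `φ` is a derivation (of degree `0`, so the graded Leibniz rule has no signs)
      (∀ x y : P.T, φ (x * y) = φ x * y + x * φ y) ∧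
      -- `φ` is `k`-linear
      (∀ (i : ℕ) (x : P.T), φ (P.e i * x) = P.e i * φ x ∧ φ (x * P.e i) = φ x * P.e i) ∧
      -- `φ` preserves the total degree
      (∀ (m : ℤ) (x : P.T), x ∈ P.g m → φ x ∈ P.g m) ∧
      -- `φ` raises word length by exactly `2`
      (∀ (p : ℕ) (x : P.T), x ∈ P.w p → φ x ∈ P.w (p + 2)) ∧
      -- `d₃ = d ∘ φ − φ ∘ d`
      (∀ x : P.T, d (φ x) - φ (d x) = d₃ x) := by
  have := ringChar.of_eq hK
  rintro ⟨φ, hφ, -, hφg, -, hφd⟩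
  let S := P.l 1 + P.l 2 + P.l 3 + P.l 4
  have hS : S ∈ P.g (-1) :=
    add_mem (add_mem (add_mem (P.l_g 1) (P.l_g 2)) (P.l_g 3)) (P.l_g 4)
  have hdS : d S = (P.c 1 3 * P.c 3 1 - P.c 3 1 * P.c 1 3) +
      (P.c 2 3 * P.c 3 2 - P.c 3 2 * P.c 2 3) + (P.c 3 4 * P.c 4 3 - P.c 4 3 * P.c 3 4) := by
    obtain ⟨-, -, -, -, -, h1, h2, h3, -, h4⟩ := hd
    simp only [S, map_add, h1, h2, h3, h4, zero_smul, sub_zero]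
    abel
  have hcomm : ∀ a b, P.quarticTrace (φ (a * b - b * a)) = 0 :=
    map_derivation_commutator_eq_zero P.quarticTrace.toAddMonoidHom P.quarticTrace_mul_comm
      φ.toAddMonoidHom hφ
  have hφdS : P.quarticTrace (φ (d S)) = 0 := by
    rw [hdS, map_add, map_add, map_add, map_add, hcomm, hcomm, hcomm, add_zero, add_zero]
  have hdφS : P.quarticTrace (d (φ S)) = 0 := hd.quarticTrace_map_eq_zero_of_mem_g (hφg _ _ hS)
  have hd₃S : P.quarticTrace (d₃ S) = -1 := by
    simp only [S, map_add, hd₃l 1 (by norm_num), hd₃l 2 (by norm_num), hd₃l 4 (by norm_num),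
      hd₃l3, map_neg, P.quarticTrace_central_cycle, add_zero, zero_add]
  have key := congrArg P.quarticTrace (hφd S)
  rw [map_sub, hdφS, hφdS, hd₃S] at key
  norm_num at key

/-- Let `K` be a field of characteristic `2` and consider the Ginzburg
DG-algebra `G_{D_4} = (T, d)` for the `D_4` tree (vertices `1,2,3,4`, central vertex
`3`), and let `d₃` be the degree `+1` `k`-linear derivation of `T` vanishing on all
generators except `d₃(ℓ₃) = −c_{31}c_{13}c_{32}c_{23}`.  Then there is no `k`-linear
derivation `φ` of `T` which preserves total degree, raises word length by exactly `2`,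
and satisfies `d₃ = d∘φ − φ∘d`.  (Consequently the obstruction class
`[d̃₃] ∈ HH²(G_{D_4}, G_{D_4}[−2])` is nonzero in characteristic `2`.) -/
theorem statement2 (K : Type) [Field K] (hK : ringChar K = 2)
    (P : DnPres K 4) (d : P.T →ₗ[K] P.T) (hd : IsDnDiff P d 0)
    (d₃ : P.T →ₗ[K] P.T)
    (hd₃deg : ∀ (m : ℤ) (x : P.T), x ∈ P.g m → d₃ x ∈ P.g (m + 1))
    (hd₃w : ∀ (p : ℕ) (x : P.T), x ∈ P.w p → d₃ x ∈ P.w (p + 3))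
    (hd₃leib : ∀ (m : ℤ) (x : P.T), x ∈ P.g m → ∀ y : P.T,
      d₃ (x * y) = d₃ x * y + negOneZ m • (x * d₃ y))
    (hd₃e : ∀ i, d₃ (P.e i) = 0)
    (hd₃c : ∀ i j, d₃ (P.c i j) = 0)
    (hd₃l : ∀ i, i ≠ 3 → d₃ (P.l i) = 0)
    (hd₃l3 : d₃ (P.l 3) = -(P.c 3 1 * P.c 1 3 * P.c 3 2 * P.c 2 3)) :
    ¬ ∃ φ : P.T →ₗ[K] P.T,
      -- `φ` is a derivation (of degree `0`, so the graded Leibniz rule has no signs)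
      (∀ x y : P.T, φ (x * y) = φ x * y + x * φ y) ∧
      -- `φ` is `k`-linear
      (∀ (i : ℕ) (x : P.T), φ (P.e i * x) = P.e i * φ x ∧ φ (x * P.e i) = φ x * P.e i) ∧
      -- `φ` preserves the total degree
      (∀ (m : ℤ) (x : P.T), x ∈ P.g m → φ x ∈ P.g m) ∧
      -- `φ` raises word length by exactly `2`
      (∀ (p : ℕ) (x : P.T), x ∈ P.w p → φ x ∈ P.w (p + 2)) ∧
      -- `d₃ = d ∘ φ − φ ∘ d`
      (∀ x : P.T, d (φ x) - φ (d x) = d₃ x) :=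
  statement2_general K hK P d hd d₃ hd₃l hd₃l3
end

section
/- Let K be any field and Γ a finite tree (with edges oriented arbitrarily to form a quiver). The zigzag algebra A_Γ is a quadratic algebra A_Γ = T_k V/(J), where V is the k-bimodule spanned by the arrows of the double quiver DΓ placed in internal degree 1 and J ⊂ V ⊗_k V is spanned by the defining relations. Its quadratic dual A_Γ^! = T_k(V^∨[−1])/(J^⊥[−2]) is isomorphic, as a graded algebra, to the preprojective algebra Π_Γ equipped with its path-length grading. -/
section

variable {V : Type} [Fintype V] [DecidableEq V] (G : SimpleGraph V) [DecidableRel G.Adj]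

/-- The arrows of the double quiver `DΓ` of the tree `Γ`: ordered adjacent pairs `(u,v)`,
where the arrow `a_{uv}` satisfies `a_{uv} ∈ e_u ⬝ A_Γ ⬝ e_v`. -/
def Arr : Type := {p : V × V // G.Adj p.1 p.2}

instance : Fintype (Arr G) := by unfold Arr; infer_instance
instance : DecidableEq (Arr G) := by unfold Arr; infer_instance

/-- Composable pairs of arrows: the basis of the degree-`2` part `V ⊗_k V` of the tensor
algebra `T_k V` on the arrow bimodule `V`. -/
def CompPair : Type := {q : Arr G × Arr G // (q.1).val.2 = (q.2).val.1}

/-- Composable pairs of dual arrows: the basis of the degree-`2` part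
`V^∨ ⊗_k V^∨` of `T_k (V^∨[−1])`; the pair `(b, a)` stands for `b^∨ ⊗ a^∨`, where the
dual arrow `a^∨` of `a = a_{uv}` satisfies `a^∨ ∈ e_v ⬝ A_Γ^! ⬝ e_u`. -/
def DualPair : Type := {q : Arr G × Arr G // (q.2).val.2 = (q.1).val.1}

instance : Fintype (CompPair G) := by unfold CompPair; infer_instance
instance : DecidableEq (CompPair G) := by unfold CompPair; infer_instance
instance : Fintype (DualPair G) := by unfold DualPair; infer_instance
instance : DecidableEq (DualPair G) := by unfold DualPair; infer_instance

/-- The bijection `(x, y) ↦ (y, x)` matching a composable pair with the dual pair that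
pairs nontrivially against it. -/
def dswap : CompPair G → DualPair G := fun q => ⟨(q.val.2, q.val.1), q.property⟩

variable (K : Type) [Field K]

/-- The indicator basis vector of a composable pair. -/
def indC (q0 : CompPair G) : CompPair G → K := fun q => if q = q0 then 1 else 0

/-- The canonical pairing between `V^∨ ⊗_k V^∨` and `V ⊗_k V`, sending
`b^∨ ⊗ a^∨ ⊗ x ⊗ y` to `(−1)^{|b|} b^∨(y) a^∨(x) = −δ_{b,y} δ_{a,x}` (all arrows have
internal degree `1`). -/
def quadPairing (φ : DualPair G → K) (ψ : CompPair G → K) : K :=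
  -∑ q : CompPair G, φ (dswap G q) * ψ q

/-- The space `J ⊆ V ⊗_k V` of quadratic relations of the zigzag algebra `A_Γ`: the span
of the compositions `a_{uv} ⊗ a_{vw}` (`u ≠ w`) and of the differences
`a_{vw} ⊗ a_{wv} − a_{vu} ⊗ a_{uv}`. -/
def zigzagJ : Submodule K (CompPair G → K) :=
  Submodule.span K
    ({ψ | ∃ (u v w : V) (h1 : G.Adj u v) (h2 : G.Adj v w), u ≠ w ∧
        ψ = indC G K ⟨(⟨(u, v), h1⟩, ⟨(v, w), h2⟩), rfl⟩} ∪
     {ψ | ∃ (v u w : V) (h1 : G.Adj v u) (h2 : G.Adj v w),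
        ψ = indC G K ⟨(⟨(v, w), h2⟩, ⟨(w, v), h2.symm⟩), rfl⟩
           - indC G K ⟨(⟨(v, u), h1⟩, ⟨(u, v), h1.symm⟩), rfl⟩})

end

/-!
A tree is bipartite, so there is a sign `t : V → K`, `t v = ±1`, flipping along every edge. The
orthogonal complement `J^⊥` consists of the functionals vanishing off the loops `a^∨_{wu} a^∨_{uw}`
and constant on the loops at each vertex `u`; hence `A_Γ^!` is the path algebra of `DΓ` modulo the
unsigned sums `Σ_w a^∨_{wu} a^∨_{uw}`. Rescaling every arrow by `±1` (`arrowSign`) turns the sum at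
`u` into `t u` times the preprojective relation at `u`, so the two universal properties give
mutually inverse algebra maps. These send generators to generators of the same degree, and both
algebras are generated by them, so they respect the path-length gradings.
-/

open Finset

section Signs

variable {V : Type} {K : Type} [Field K]

theorem SimpleGraph.Colorable.exists_sign {G : SimpleGraph V} (hG : G.Colorable 2) :
    ∃ t : V → K, (∀ v, t v * t v = 1) ∧ ∀ u w, G.Adj u w → t w = -t u := by
  obtain ⟨C⟩ := hG
  have hflip : ∀ i j : Fin 2, i ≠ j →
      (if j = 0 then (1 : K) else -1) = -if i = 0 then 1 else -1 := by
    intro i j; fin_cases i <;> fin_cases j <;> simp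
  exact ⟨fun v => if C v = 0 then 1 else -1, fun v => by dsimp only; split_ifs <;> simp,
    fun u w huw => hflip _ _ (C.valid huw)⟩

variable (K) (ornt : V → V → Prop) [DecidableRel ornt]

/-- Chosen so that `arrowSign t w u * arrowSign t u w = ± t u`, the sign being `+` exactly when
the edge `uw` is oriented from `u` to `w`. -/
def arrowSign (t : V → K) (u w : V) : K := if ornt u w then 1 else t w

variable {K ornt}

theorem arrowSign_mul_self {t : V → K} (ht : ∀ v, t v * t v = 1) (u w : V) :
    arrowSign K ornt t u w * arrowSign K ornt t u w = 1 := by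
  unfold arrowSign; split_ifs <;> simp [ht]

end Signs

section Gradings

variable {K ι R S : Type*} [CommRing K] [Ring R] [Ring S] [Algebra K R] [Algebra K S]
  [DecidableEq ι]

theorem DirectSum.IsInternal.mem_of_le_of_mem_iSup {𝒜 W : ι → Submodule K R}
    (h𝒜 : DirectSum.IsInternal 𝒜) (hW : ∀ i, W i ≤ 𝒜 i) {i : ι} {x : R}
    (hx : x ∈ 𝒜 i) (hxW : x ∈ ⨆ j, W j) : x ∈ W i := by
  rw [iSup_split_single W i, Submodule.mem_sup] at hxW
  obtain ⟨w, hw, y, hy, rfl⟩ := hxW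
  have hy𝒜 : y ∈ 𝒜 i := by simpa using sub_mem hx (hW i hw)
  have hy𝒜' : y ∈ ⨆ (j) (_ : j ≠ i), 𝒜 j := iSup₂_mono (fun j _ => hW j) hy
  rw [Submodule.disjoint_def.mp (iSupIndep_def.mp h𝒜.submodule_iSupIndep i) y hy𝒜 hy𝒜',
    add_zero]
  exact hw

/-- The pieces `𝒜 j ⊓ f⁻¹(ℬ j)` span a subalgebra containing `X`, hence everything, and
independence of the `𝒜 j` then puts `x` in `𝒜 i ⊓ f⁻¹(ℬ i)`. -/
theorem AlgHom.mem_of_adjoin_eq_top [AddMonoid ι] {𝒜 : ι → Submodule K R}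
    {ℬ : ι → Submodule K S} [SetLike.GradedMonoid 𝒜] [SetLike.GradedMonoid ℬ]
    (h𝒜 : DirectSum.IsInternal 𝒜) (f : R →ₐ[K] S) {X : Set R} (hX : Algebra.adjoin K X = ⊤)
    (hXf : ∀ x ∈ X, ∃ i, x ∈ 𝒜 i ∧ f x ∈ ℬ i) {i : ι} {x : R} (hx : x ∈ 𝒜 i) : f x ∈ ℬ i := by
  let W : ι → Submodule K R := fun j => 𝒜 j ⊓ (ℬ j).comap f.toLinearMap
  have hW : ∀ j k, W j * W k ≤ W (j + k) := fun j k => Submodule.mul_le.2 fun x hx y hy =>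
    ⟨SetLike.mul_mem_graded hx.1 hy.1, show f (x * y) ∈ ℬ (j + k) from
      (map_mul f x y).symm ▸ SetLike.mul_mem_graded (hx.2 : f x ∈ ℬ j) hy.2⟩
  have hone : (1 : R) ∈ W 0 :=
    ⟨SetLike.GradedOne.one_mem, by simpa using (SetLike.GradedOne.one_mem : (1 : S) ∈ ℬ 0)⟩
  have hmul : (⨆ j, W j) * (⨆ j, W j) ≤ ⨆ j, W j := by
    simp only [Submodule.iSup_mul, Submodule.mul_iSup, iSup_le_iff]
    exact fun j k => (hW k j).trans (le_iSup W (k + j))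
  let A : Subalgebra K R := (⨆ j, W j).toSubalgebra (le_iSup W 0 hone)
    fun x y hx hy => hmul (Submodule.mul_mem_mul hx hy)
  have hXA : Algebra.adjoin K X ≤ A := Algebra.adjoin_le fun x hx => by
    obtain ⟨j, hj⟩ := hXf x hx
    exact le_iSup W j hj
  have hxW : x ∈ ⨆ j, W j := hXA (hX ▸ Algebra.mem_top)
  exact (h𝒜.mem_of_le_of_mem_iSup (fun j => inf_le_left) hx hxW).2

end Gradings

section LoopRelations

variable {V : Type} (G : SimpleGraph V) {K : Type} [Field K] {S T : Type} [Ring S] [Algebra K S]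
  [Ring T] [Algebra K T] (ornt : V → V → Prop) [DecidableRel ornt] (t : V → K)

def twistArrows (x : V → V → S) (a : Arr G) : S :=
  arrowSign K ornt t a.val.1 a.val.2 • x a.val.2 a.val.1

variable {G ornt t} in
theorem AlgHom.map_twistArrows (f : S →ₐ[K] T) (x : V → V → S) (a : Arr G) :
    f (twistArrows G ornt t x a) = twistArrows G ornt t (fun v w => f (x v w)) a :=
  map_smul f _ _

theorem twistArrows_mem {p : Submodule K S} {x : V → V → S} (hx : ∀ v w, x v w ∈ p) (a : Arr G) :
    twistArrows G ornt t x a ∈ p :=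
  p.smul_mem _ (hx _ _)

variable [DecidableRel G.Adj]

def untwistArrows (ϑ : Arr G → S) (v w : V) : S :=
  if h : G.Adj v w then arrowSign K ornt t w v • ϑ ⟨(w, v), h.symm⟩ else 0

variable {G ornt t} in
theorem AlgHom.map_untwistArrows (f : S →ₐ[K] T) (ϑ : Arr G → S) (v w : V) :
    f (untwistArrows G ornt t ϑ v w) = untwistArrows G ornt t (f ∘ ϑ) v w := by
  rw [untwistArrows, untwistArrows, apply_dite f, map_zero]
  exact dite_congr rfl (fun _ => map_smul f _ _) fun _ => rfl

theorem untwistArrows_mem {p : Submodule K S} {ϑ : Arr G → S} (hϑ : ∀ a, ϑ a ∈ p) (v w : V) :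
    untwistArrows G ornt t ϑ v w ∈ p := by
  unfold untwistArrows
  split
  exacts [p.smul_mem _ (hϑ _), p.zero_mem]

variable {G ornt t}

theorem twistArrows_untwistArrows (ht : ∀ v, t v * t v = 1) (ϑ : Arr G → S) :
    twistArrows G ornt t (untwistArrows G ornt t ϑ) = ϑ := funext fun a => by
  rw [twistArrows, untwistArrows, dif_pos a.prop.symm, smul_smul, arrowSign_mul_self ht, one_smul]
  rfl

theorem untwistArrows_twistArrows (ht : ∀ v, t v * t v = 1) {x : V → V → S}
    (hx : ∀ v w, ¬ G.Adj v w → x v w = 0) :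
    untwistArrows G ornt t (twistArrows G ornt t x) = x := funext₂ fun v w => by
  by_cases hvw : G.Adj v w
  · simp only [untwistArrows, dif_pos hvw, twistArrows, smul_smul, arrowSign_mul_self ht,
      one_smul]
  · rw [untwistArrows, dif_neg hvw, hx v w hvw]

variable [Fintype V]

variable (G) in
def dualLoopSum (ϑ : Arr G → S) (u : V) : S :=
  ∑ w, if h : G.Adj u w then ϑ ⟨(w, u), h.symm⟩ * ϑ ⟨(u, w), h⟩ else 0

variable (ornt) in
def preprojectiveRel (x : V → V → S) (v : V) : S :=
  (∑ w, if ornt v w then x v w * x w v else 0) - (∑ w, if ornt w v then x v w * x w v else 0)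

theorem dualLoopSum_twistArrows (hor : ∀ u v, G.Adj u v ↔ ornt u v ∨ ornt v u)
    (hor2 : ∀ u v, ornt u v → ¬ ornt v u) (ht : ∀ u w, G.Adj u w → t w = -t u)
    (x : V → V → S) (u : V) :
    dualLoopSum G (twistArrows G ornt t x) u = t u • preprojectiveRel ornt x u := by
  rw [preprojectiveRel, ← sum_sub_distrib, smul_sum, dualLoopSum]
  refine sum_congr rfl fun w _ => ?_
  by_cases huw : G.Adj u w
  · simp only [dif_pos huw, twistArrows, smul_mul_smul_comm]
    rcases (hor u w).1 huw with h | h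
    · simp [arrowSign, h, hor2 u w h]
    · simp [arrowSign, h, hor2 w u h, ht u w huw]
  · have ⟨h, h'⟩ : ¬ ornt u w ∧ ¬ ornt w u := by rw [← not_or, ← hor]; exact huw
    simp [huw, h, h']

end LoopRelations

section QuadraticDual

variable {V : Type} (G : SimpleGraph V)

def DualPair.IsLoop {G : SimpleGraph V} (q : DualPair G) : Prop :=
  q.val.1.val = q.val.2.val.swap

def loopPair {u w : V} (h : G.Adj u w) : DualPair G := ⟨(⟨(w, u), h.symm⟩, ⟨(u, w), h⟩), rfl⟩

@[simp]
theorem loopPair_isLoop {u w : V} (h : G.Adj u w) : (loopPair G h).IsLoop :=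
  rfl

theorem DualPair.IsLoop.eq_loopPair {q : DualPair G} (hq : q.IsLoop) :
    q = loopPair G q.val.2.prop :=
  Subtype.ext (Prod.ext (Subtype.ext hq) rfl)

variable [Fintype V] [DecidableEq V] [DecidableRel G.Adj] (K : Type) [Field K]

theorem sum_dualPair_of_isLoop {M : Type*} [AddCommMonoid M] (F : DualPair G → M)
    (hF : ∀ q : DualPair G, ¬ q.IsLoop → F q = 0) :
    ∑ q, F q = ∑ u, ∑ w, if h : G.Adj u w then F (loopPair G h) else 0 := by
  classical
  rw [← Finset.sum_filter_of_ne (p := DualPair.IsLoop) fun q _ => not_imp_comm.1 (hF q),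
    ← Fintype.sum_prod_type']
  refine Finset.sum_of_injOn (fun q => q.val.2.val) ?_ (fun _ _ => mem_coe.2 (mem_univ _)) ?_ ?_
  · intro q hq q' hq' hqq'
    rw [(mem_filter.1 hq).2.eq_loopPair, (mem_filter.1 hq').2.eq_loopPair]
    congr
  · rintro ⟨u, w⟩ - hp
    exact dif_neg fun h => hp ⟨loopPair G h, mem_filter.2 ⟨mem_univ _, rfl⟩, rfl⟩
  · intro q hq
    rw [dif_pos q.val.2.prop, ← (mem_filter.1 hq).2.eq_loopPair]

def quadPairingLinear (φ : DualPair G → K) : (CompPair G → K) →ₗ[K] K where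
  toFun := quadPairing G K φ
  map_add' ψ ψ' := by simp only [quadPairing, Pi.add_apply, mul_add, sum_add_distrib]; ring
  map_smul' c ψ := by
    simp only [quadPairing, Pi.smul_apply, smul_eq_mul, RingHom.id_apply, mul_neg, mul_sum]
    exact congrArg _ (sum_congr rfl fun _ _ => by ring)

theorem quadPairing_indC (φ : DualPair G → K) (q₀ : CompPair G) :
    quadPairing G K φ (indC G K q₀) = -φ (dswap G q₀) := by
  simp [quadPairing, indC]

theorem perp_zigzagJ_iff (φ : DualPair G → K) :
    (∀ ψ ∈ zigzagJ G K, quadPairing G K φ ψ = 0) ↔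
      (∀ q : DualPair G, ¬ q.IsLoop → φ q = 0) ∧
      ∀ (u w w' : V) (h : G.Adj u w) (h' : G.Adj u w'), φ (loopPair G h) = φ (loopPair G h') := by
  have hloop : ∀ (v u w : V) (h₁ : G.Adj v u) (h₂ : G.Adj v w), quadPairing G K φ
      (indC G K ⟨(⟨(v, w), h₂⟩, ⟨(w, v), h₂.symm⟩), rfl⟩ -
        indC G K ⟨(⟨(v, u), h₁⟩, ⟨(u, v), h₁.symm⟩), rfl⟩) =
      φ (loopPair G h₁) - φ (loopPair G h₂) := fun v u w h₁ h₂ =>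
    (map_sub (quadPairingLinear G K φ) _ _).trans <|
      (congrArg₂ (· - ·) (quadPairing_indC G K φ _) (quadPairing_indC G K φ _)).trans
        (neg_sub_neg _ _)
  constructor
  · intro hφ
    refine ⟨?_, fun u w w' h h' => ?_⟩
    · rintro ⟨⟨⟨⟨b₁, b₂⟩, hb⟩, ⟨⟨a₁, a₂⟩, ha⟩⟩, hab⟩ hq
      obtain rfl : a₂ = b₁ := hab
      have := hφ _ (Submodule.subset_span (Or.inl ⟨a₁, a₂, b₂, ha, hb,
        fun h => hq (by subst h; rfl), rfl⟩))
      exact neg_eq_zero.1 ((quadPairing_indC G K φ _).symm.trans this)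
    · have := hφ _ (Submodule.subset_span (Or.inr ⟨u, w', w, h', h, rfl⟩))
      rwa [hloop, sub_eq_zero, eq_comm] at this
  · rintro ⟨hnl, hconst⟩ ψ hψ
    refine (Submodule.span_le (p := LinearMap.ker (quadPairingLinear G K φ))).2 ?_ hψ
    rintro _ (⟨u, v, w, h₁, h₂, huw, rfl⟩ | ⟨v, u, w, h₁, h₂, rfl⟩)
    · exact (quadPairing_indC G K φ _).trans
        (neg_eq_zero.2 (hnl _ fun h => huw (congrArg Prod.snd h).symm))
    · exact (hloop v u w h₁ h₂).trans (sub_eq_zero.2 (hconst v u w h₁ h₂))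

theorem dualRelations_iff {S : Type} [Ring S] [Algebra K S] (ϑ : Arr G → S) :
    (∀ φ : DualPair G → K, (∀ ψ ∈ zigzagJ G K, quadPairing G K φ ψ = 0) →
      ∑ q : DualPair G, φ q • (ϑ q.val.1 * ϑ q.val.2) = 0) ↔ ∀ u, dualLoopSum G ϑ u = 0 := by
  classical
  constructor
  · intro h u
    let φ : DualPair G → K := fun q => if q.IsLoop ∧ q.val.2.val.1 = u then 1 else 0
    have hφ := h φ ((perp_zigzagJ_iff G K φ).2
      ⟨fun q hq => if_neg fun h => hq h.1, fun u' w w' h h' => by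
        simp only [φ, loopPair_isLoop, true_and]; rfl⟩)
    rw [sum_dualPair_of_isLoop G _ fun q hq => by simp [φ, hq], sum_eq_single u
      (fun u' _ hu' => sum_eq_zero fun w _ => by simp [φ, loopPair, DualPair.IsLoop, hu'])
      (fun hu => absurd (mem_univ u) hu)] at hφ
    simp [φ, loopPair, DualPair.IsLoop] at hφ
    exact hφ
  · intro h φ hφ
    obtain ⟨hnl, hconst⟩ := (perp_zigzagJ_iff G K φ).1 hφ
    rw [sum_dualPair_of_isLoop G _ fun q hq => by rw [hnl q hq, zero_smul]]
    refine sum_eq_zero fun u _ => ?_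
    by_cases hu : ∃ w, G.Adj u w
    · obtain ⟨w₀, h₀⟩ := hu
      calc _ = φ (loopPair G h₀) • dualLoopSum G ϑ u := by
            rw [dualLoopSum, smul_sum]
            refine sum_congr rfl fun w _ => ?_
            split_ifs with huw
            · rw [hconst u w w₀ huw h₀]; rfl
            · rw [smul_zero]
        _ = 0 := by rw [h u, smul_zero]
    · push Not at hu
      exact sum_eq_zero fun w _ => dif_neg (hu w)

end QuadraticDual

section Families

variable {V : Type} [Fintype V] {G : SimpleGraph V} {K : Type} [Field K] {S T : Type} [Ring S]
  [Algebra K S] [Ring T] [Algebra K T]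

section Preprojective

variable (G) in
/-- Images in `S` of the vertex idempotents and the arrows of `Π_Γ`, satisfying its defining
relations. -/
structure IsPreprojectiveFamily (ornt : V → V → Prop) [DecidableRel ornt] (ε : V → S)
    (γ : V → V → S) : Prop where
  eq_zero_of_not_adj : ∀ v w, ¬ G.Adj v w → γ v w = 0
  idem : ∀ v, ε v * ε v = ε v
  orth : ∀ v w, v ≠ w → ε v * ε w = 0
  sum_eq_one : ∑ v, ε v = 1
  comp : ∀ v w, ε v * γ v w = γ v w ∧ γ v w * ε w = γ v w
  rel : ∀ v, preprojectiveRel ornt γ v = 0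

variable {ornt : V → V → Prop} [DecidableRel ornt]

theorem IsPreprojectiveFamily.of_injective (f : S →ₐ[K] T) (hf : Function.Injective f)
    {ε : V → S} {γ : V → V → S}
    (h : IsPreprojectiveFamily G ornt (f ∘ ε) (fun v w => f (γ v w))) :
    IsPreprojectiveFamily G ornt ε γ where
  eq_zero_of_not_adj v w hvw := hf (by simpa using h.eq_zero_of_not_adj v w hvw)
  idem v := hf (by simpa using h.idem v)
  orth v w hvw := hf (by simpa using h.orth v w hvw)
  sum_eq_one := hf (by simpa using h.sum_eq_one)
  comp v w := ⟨hf (by simpa using (h.comp v w).1), hf (by simpa using (h.comp v w).2)⟩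
  rel v := hf (by simpa [preprojectiveRel, apply_ite f] using h.rel v)

theorem IsPreprojectiveFamily.adjoin_eq_top {ε : V → S} {γ : V → V → S}
    (h : IsPreprojectiveFamily G ornt ε γ)
    (hfree : ∀ (U : Type) [Ring U] [Algebra K U] (ε' : V → U) (γ' : V → V → U),
      IsPreprojectiveFamily G ornt ε' γ' →
        ∃! f : S →ₐ[K] U, (∀ v, f (ε v) = ε' v) ∧ ∀ v w, f (γ v w) = γ' v w) :
    Algebra.adjoin K (Set.range ε ∪ Set.range (Function.uncurry γ)) = ⊤ := by
  set A := Algebra.adjoin K (Set.range ε ∪ Set.range (Function.uncurry γ))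
  obtain ⟨s, ⟨hsε, hsγ⟩, -⟩ := hfree A (fun v => ⟨ε v, Algebra.subset_adjoin (.inl ⟨v, rfl⟩)⟩)
    (fun v w => ⟨γ v w, Algebra.subset_adjoin (.inr ⟨(v, w), rfl⟩)⟩)
    (.of_injective A.val Subtype.val_injective h)
  have hs : A.val.comp s = AlgHom.id K S := (hfree S ε γ h).unique
    ⟨fun v => congrArg Subtype.val (hsε v), fun v w => congrArg Subtype.val (hsγ v w)⟩
    ⟨fun _ => rfl, fun _ _ => rfl⟩
  refine eq_top_iff.2 fun x _ => ?_
  rw [← AlgHom.id_apply (R := K) x, ← hs]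
  exact (s x).2

variable {𝒜 : ℕ → Submodule K S} {ℬ : ℕ → Submodule K T} [SetLike.GradedMonoid 𝒜]
  [SetLike.GradedMonoid ℬ]

theorem IsPreprojectiveFamily.map_mem {ε : V → S} {γ : V → V → S}
    (h : IsPreprojectiveFamily G ornt ε γ)
    (hfree : ∀ (U : Type) [Ring U] [Algebra K U] (ε' : V → U) (γ' : V → V → U),
      IsPreprojectiveFamily G ornt ε' γ' →
        ∃! f : S →ₐ[K] U, (∀ v, f (ε v) = ε' v) ∧ ∀ v w, f (γ v w) = γ' v w)
    (h𝒜 : DirectSum.IsInternal 𝒜) (f : S →ₐ[K] T) (hε : ∀ v, ε v ∈ 𝒜 0 ∧ f (ε v) ∈ ℬ 0)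
    (hγ : ∀ v w, γ v w ∈ 𝒜 1 ∧ f (γ v w) ∈ ℬ 1) {i : ℕ} {x : S} (hx : x ∈ 𝒜 i) :
    f x ∈ ℬ i := by
  refine f.mem_of_adjoin_eq_top h𝒜 (h.adjoin_eq_top hfree) ?_ hx
  rintro _ (⟨v, rfl⟩ | ⟨⟨v, w⟩, rfl⟩)
  exacts [⟨0, hε v⟩, ⟨1, hγ v w⟩]

end Preprojective

variable [DecidableEq V] [DecidableRel G.Adj]

variable (G K) in
/-- Images in `S` of the vertex idempotents and the dual arrows of `A_Γ^!`, satisfying its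
defining relations. -/
structure IsZigzagDualFamily (ε : V → S) (ϑ : Arr G → S) : Prop where
  idem : ∀ v, ε v * ε v = ε v
  orth : ∀ v w, v ≠ w → ε v * ε w = 0
  sum_eq_one : ∑ v, ε v = 1
  comp : ∀ a : Arr G, ε a.val.2 * ϑ a = ϑ a ∧ ϑ a * ε a.val.1 = ϑ a
  rel : ∀ φ : DualPair G → K, (∀ ψ ∈ zigzagJ G K, quadPairing G K φ ψ = 0) →
    ∑ q : DualPair G, φ q • (ϑ q.val.1 * ϑ q.val.2) = 0

theorem IsZigzagDualFamily.of_injective (f : S →ₐ[K] T) (hf : Function.Injective f)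
    {ε : V → S} {ϑ : Arr G → S} (h : IsZigzagDualFamily G K (f ∘ ε) (f ∘ ϑ)) :
    IsZigzagDualFamily G K ε ϑ where
  idem v := hf (by simpa using h.idem v)
  orth v w hvw := hf (by simpa using h.orth v w hvw)
  sum_eq_one := hf (by simpa using h.sum_eq_one)
  comp a := ⟨hf (by simpa using (h.comp a).1), hf (by simpa using (h.comp a).2)⟩
  rel φ hφ := hf (by simpa using h.rel φ hφ)

theorem IsZigzagDualFamily.adjoin_eq_top {ε : V → S} {ϑ : Arr G → S}
    (h : IsZigzagDualFamily G K ε ϑ)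
    (hfree : ∀ (U : Type) [Ring U] [Algebra K U] (ε' : V → U) (ϑ' : Arr G → U),
      IsZigzagDualFamily G K ε' ϑ' →
        ∃! f : S →ₐ[K] U, (∀ v, f (ε v) = ε' v) ∧ ∀ a, f (ϑ a) = ϑ' a) :
    Algebra.adjoin K (Set.range ε ∪ Set.range ϑ) = ⊤ := by
  set A := Algebra.adjoin K (Set.range ε ∪ Set.range ϑ)
  obtain ⟨s, ⟨hsε, hsϑ⟩, -⟩ := hfree A (fun v => ⟨ε v, Algebra.subset_adjoin (.inl ⟨v, rfl⟩)⟩)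
    (fun a => ⟨ϑ a, Algebra.subset_adjoin (.inr ⟨a, rfl⟩)⟩)
    (.of_injective A.val Subtype.val_injective h)
  have hs : A.val.comp s = AlgHom.id K S := (hfree S ε ϑ h).unique
    ⟨fun v => congrArg Subtype.val (hsε v), fun a => congrArg Subtype.val (hsϑ a)⟩
    ⟨fun _ => rfl, fun _ => rfl⟩
  refine eq_top_iff.2 fun x _ => ?_
  rw [← AlgHom.id_apply (R := K) x, ← hs]
  exact (s x).2

section Graded

variable {𝒜 : ℕ → Submodule K S} {ℬ : ℕ → Submodule K T} [SetLike.GradedMonoid 𝒜]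
  [SetLike.GradedMonoid ℬ]

theorem IsZigzagDualFamily.map_mem {ε : V → S} {ϑ : Arr G → S}
    (h : IsZigzagDualFamily G K ε ϑ)
    (hfree : ∀ (U : Type) [Ring U] [Algebra K U] (ε' : V → U) (ϑ' : Arr G → U),
      IsZigzagDualFamily G K ε' ϑ' →
        ∃! f : S →ₐ[K] U, (∀ v, f (ε v) = ε' v) ∧ ∀ a, f (ϑ a) = ϑ' a)
    (h𝒜 : DirectSum.IsInternal 𝒜) (f : S →ₐ[K] T) (hε : ∀ v, ε v ∈ 𝒜 0 ∧ f (ε v) ∈ ℬ 0)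
    (hϑ : ∀ a, ϑ a ∈ 𝒜 1 ∧ f (ϑ a) ∈ ℬ 1) {i : ℕ} {x : S} (hx : x ∈ 𝒜 i) : f x ∈ ℬ i := by
  refine f.mem_of_adjoin_eq_top h𝒜 (h.adjoin_eq_top hfree) ?_ hx
  rintro _ (⟨v, rfl⟩ | ⟨a, rfl⟩)
  exacts [⟨0, hε v⟩, ⟨1, hϑ a⟩]

end Graded

variable {ornt : V → V → Prop} [DecidableRel ornt] {t : V → K}

theorem IsPreprojectiveFamily.twist (hor : ∀ u v, G.Adj u v ↔ ornt u v ∨ ornt v u)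
    (hor2 : ∀ u v, ornt u v → ¬ ornt v u) (ht : ∀ u w, G.Adj u w → t w = -t u) {ε : V → S}
    {x : V → V → S} (h : IsPreprojectiveFamily G ornt ε x) :
    IsZigzagDualFamily G K ε (twistArrows G ornt t x) where
  idem := h.idem
  orth := h.orth
  sum_eq_one := h.sum_eq_one
  comp a := ⟨by rw [twistArrows, mul_smul_comm, (h.comp _ _).1],
    by rw [twistArrows, smul_mul_assoc, (h.comp _ _).2]⟩
  rel := (dualRelations_iff G K _).2 fun u => by
    rw [dualLoopSum_twistArrows hor hor2 ht, h.rel, smul_zero]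

theorem IsZigzagDualFamily.untwist (hor : ∀ u v, G.Adj u v ↔ ornt u v ∨ ornt v u)
    (hor2 : ∀ u v, ornt u v → ¬ ornt v u) (ht : ∀ v, t v * t v = 1)
    (htadj : ∀ u w, G.Adj u w → t w = -t u) {ε : V → S} {ϑ : Arr G → S}
    (h : IsZigzagDualFamily G K ε ϑ) :
    IsPreprojectiveFamily G ornt ε (untwistArrows G ornt t ϑ) where
  eq_zero_of_not_adj v w hvw := dif_neg hvw
  idem := h.idem
  orth := h.orth
  sum_eq_one := h.sum_eq_one
  comp v w := by
    by_cases hvw : G.Adj v w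
    · obtain ⟨h₁, h₂⟩ := h.comp ⟨(w, v), hvw.symm⟩
      simp only [untwistArrows, dif_pos hvw, mul_smul_comm, smul_mul_assoc]
      exact ⟨congrArg _ h₁, congrArg _ h₂⟩
    · simp only [untwistArrows, dif_neg hvw, mul_zero, zero_mul, and_self]
  rel v := by
    have hv := dualLoopSum_twistArrows hor hor2 htadj (untwistArrows G ornt t ϑ) v
    rw [twistArrows_untwistArrows ht, (dualRelations_iff G K ϑ).1 h.rel] at hv
    rw [← one_smul K (preprojectiveRel ornt _ v), ← ht v, mul_smul, ← hv, smul_zero]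

end Families

/-- Let `K` be any field and `Γ` a finite tree (with edges oriented
arbitrarily to form a quiver).  The zigzag algebra `A_Γ` is a quadratic algebra
`A_Γ = T_k V/(J)`, where `V` is the `k`-bimodule spanned by the arrows of the double
quiver `DΓ` placed in internal degree `1` and `J ⊂ V ⊗_k V` is spanned by the defining
relations.  Its quadratic dual `A_Γ^! = T_k(V^∨[−1])/(J^⊥[−2])` is isomorphic, as a
graded algebra, to the preprojective algebra `Π_Γ` equipped with its path-length
grading.

Here:
* `B = A_Γ^!` (with idempotents `eB v`, dual arrows `θ a ∈ eB a.2 ⬝ B ⬝ eB a.1` for each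
  arrow `a` of `DΓ`, and path-length grading `grB`) is pinned down by its universal
  property as the quotient of the tensor algebra `T_k(V^∨[−1])` by the orthogonal
  complement `J^⊥` of `J` under the canonical pairing `quadPairing`;
* `P = Π_Γ` (with idempotents `eP v`, arrows `χ v w`, and path-length grading `grP`) is
  pinned down by its universal property as the quotient of the path algebra of `DΓ` by
  the preprojective relations `Σ_{g ∈ Γ₁} (g*g − gg*)`. -/
theorem statement6 (K : Type) [Field K]
    (V : Type) [Fintype V] [DecidableEq V]
    (G : SimpleGraph V) [DecidableRel G.Adj] (hG : G.IsTree)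
    (ornt : V → V → Prop) [instDor : ∀ v w, Decidable (ornt v w)]
    (hor : ∀ u v, G.Adj u v ↔ (ornt u v ∨ ornt v u))
    (hor2 : ∀ u v, ornt u v → ¬ ornt v u)
    -- the quadratic dual B = A_Γ^!
    (B : Type) [Ring B] [Algebra K B]
    (eB : V → B) (θ : Arr G → B) (grB : ℕ → Submodule K B)
    (hBidem : ∀ v, eB v * eB v = eB v)
    (hBorth : ∀ v w, v ≠ w → eB v * eB w = 0)
    (hBsum : ∑ v : V, eB v = 1)
    (hBcomp : ∀ a : Arr G, eB a.val.2 * θ a = θ a ∧ θ a * eB a.val.1 = θ a)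
    (hBrel : ∀ φ : DualPair G → K, (∀ ψ ∈ zigzagJ G K, quadPairing G K φ ψ = 0) →
      ∑ q : DualPair G, φ q • (θ q.val.1 * θ q.val.2) = 0)
    (hBinternal : DirectSum.IsInternal grB)
    (hBone : (1 : B) ∈ grB 0)
    (hBmul : ∀ (d₁ d₂ : ℕ) (x y : B), x ∈ grB d₁ → y ∈ grB d₂ → x * y ∈ grB (d₁ + d₂))
    (hBe : ∀ v, eB v ∈ grB 0)
    (hBθ : ∀ a, θ a ∈ grB 1)
    (hBfree : ∀ (S : Type) [Ring S] [Algebra K S] (ε : V → S) (ϑ : Arr G → S),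
      (∀ v, ε v * ε v = ε v) →
      (∀ v w, v ≠ w → ε v * ε w = 0) →
      (∑ v : V, ε v = 1) →
      (∀ a : Arr G, ε a.val.2 * ϑ a = ϑ a ∧ ϑ a * ε a.val.1 = ϑ a) →
      (∀ φ : DualPair G → K, (∀ ψ ∈ zigzagJ G K, quadPairing G K φ ψ = 0) →
        ∑ q : DualPair G, φ q • (ϑ q.val.1 * ϑ q.val.2) = 0) →
      ∃! f : B →ₐ[K] S, (∀ v, f (eB v) = ε v) ∧ (∀ a, f (θ a) = ϑ a))
    -- the preprojective algebra P = Π_Γ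
    (P : Type) [Ring P] [Algebra K P]
    (eP : V → P) (χ : V → V → P) (grP : ℕ → Submodule K P)
    (hχ0 : ∀ v w, ¬ G.Adj v w → χ v w = 0)
    (hPidem : ∀ v, eP v * eP v = eP v)
    (hPorth : ∀ v w, v ≠ w → eP v * eP w = 0)
    (hPsum : ∑ v : V, eP v = 1)
    (hPcomp : ∀ v w, eP v * χ v w = χ v w ∧ χ v w * eP w = χ v w)
    (hPrel : ∀ v : V,
      (∑ w : V, if ornt v w then χ v w * χ w v else 0) -
      (∑ w : V, if ornt w v then χ v w * χ w v else 0) = 0)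
    (hPinternal : DirectSum.IsInternal grP)
    (hPone : (1 : P) ∈ grP 0)
    (hPmul : ∀ (d₁ d₂ : ℕ) (x y : P), x ∈ grP d₁ → y ∈ grP d₂ → x * y ∈ grP (d₁ + d₂))
    (hPe : ∀ v, eP v ∈ grP 0)
    (hPχ : ∀ v w, χ v w ∈ grP 1)
    (hPfree : ∀ (S : Type) [Ring S] [Algebra K S] (ε : V → S) (γ : V → V → S),
      (∀ v w, ¬ G.Adj v w → γ v w = 0) →
      (∀ v, ε v * ε v = ε v) →
      (∀ v w, v ≠ w → ε v * ε w = 0) →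
      (∑ v : V, ε v = 1) →
      (∀ v w, ε v * γ v w = γ v w ∧ γ v w * ε w = γ v w) →
      (∀ v : V,
        (∑ w : V, if ornt v w then γ v w * γ w v else 0) -
        (∑ w : V, if ornt w v then γ v w * γ w v else 0) = 0) →
      ∃! f : P →ₐ[K] S, (∀ v, f (eP v) = ε v) ∧ (∀ v w, f (χ v w) = γ v w)) :
    ∃ φ : B ≃ₐ[K] P, ∀ s : ℕ,
      Submodule.map (φ : B →ₐ[K] P).toLinearMap (grB s) = grP s := by
  obtain ⟨t, ht, htadj⟩ := hG.isAcyclic.colorable_two.exists_sign (K := K)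
  have hB : IsZigzagDualFamily G K eB θ := ⟨hBidem, hBorth, hBsum, hBcomp, hBrel⟩
  have hP : IsPreprojectiveFamily G ornt eP χ := ⟨hχ0, hPidem, hPorth, hPsum, hPcomp, hPrel⟩
  have hBuniv : ∀ (S : Type) [Ring S] [Algebra K S] (ε : V → S) (ϑ : Arr G → S),
      IsZigzagDualFamily G K ε ϑ →
        ∃! f : B →ₐ[K] S, (∀ v, f (eB v) = ε v) ∧ ∀ a, f (θ a) = ϑ a :=
    fun S _ _ ε ϑ h => hBfree S ε ϑ h.idem h.orth h.sum_eq_one h.comp h.rel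
  have hPuniv : ∀ (S : Type) [Ring S] [Algebra K S] (ε : V → S) (γ : V → V → S),
      IsPreprojectiveFamily G ornt ε γ →
        ∃! f : P →ₐ[K] S, (∀ v, f (eP v) = ε v) ∧ ∀ v w, f (χ v w) = γ v w :=
    fun S _ _ ε γ h => hPfree S ε γ h.eq_zero_of_not_adj h.idem h.orth h.sum_eq_one h.comp h.rel
  obtain ⟨f, ⟨hfe, hfθ⟩, -⟩ := hBuniv P eP _ (hP.twist hor hor2 htadj)
  obtain ⟨g, ⟨hge, hgχ⟩, -⟩ := hPuniv B eB _ (hB.untwist hor hor2 ht htadj)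
  have hgf : g.comp f = AlgHom.id K B := (hBuniv B eB θ hB).unique
    ⟨fun v => by rw [AlgHom.comp_apply, hfe, hge], fun a => by
      rw [AlgHom.comp_apply, hfθ, g.map_twistArrows]
      simp only [hgχ]
      exact congrFun (twistArrows_untwistArrows ht θ) a⟩
    ⟨fun _ => rfl, fun _ => rfl⟩
  have hfg : f.comp g = AlgHom.id K P := (hPuniv P eP χ hP).unique
    ⟨fun v => by rw [AlgHom.comp_apply, hge, hfe], fun v w => by
      rw [AlgHom.comp_apply, hgχ, f.map_untwistArrows,
        show ⇑f ∘ θ = twistArrows G ornt t χ from funext hfθ, untwistArrows_twistArrows ht hχ0]⟩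
    ⟨fun _ => rfl, fun _ _ => rfl⟩
  have : SetLike.GradedMonoid grB := { one_mem := hBone, mul_mem := hBmul }
  have : SetLike.GradedMonoid grP := { one_mem := hPone, mul_mem := hPmul }
  refine ⟨AlgEquiv.ofAlgHom f g hfg hgf, fun s => le_antisymm ?_ fun y hy => ?_⟩
  · rintro _ ⟨x, hx, rfl⟩
    exact hB.map_mem hBuniv hBinternal f (fun v => ⟨hBe v, hfe v ▸ hPe v⟩)
      (fun a => ⟨hBθ a, hfθ a ▸ twistArrows_mem G ornt t hPχ a⟩) hx
  · exact ⟨g y, hP.map_mem hPuniv hPinternal g (fun v => ⟨hPe v, hge v ▸ hBe v⟩)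
      (fun v w => ⟨hPχ v w, hgχ v w ▸ untwistArrows_mem G ornt t hBθ v w⟩) hy,
      AlgHom.congr_fun hfg y⟩
end

section
/- Let K be a field and n ≥ 4. Let B be the trivial extension algebra T(KΓ) of the path algebra of the D_n quiver Γ with vertices 1,…,n, arrows a_i : i → i+1 for 1 ≤ i ≤ n−3, a_{n−2} : n−2 → n−1 and a_{n−1} : n−2 → n. Then B is isomorphic to KQ/I, where Q is the quiver with vertices 1,…,n and arrows α_i : i → i+1 for 1 ≤ i ≤ n−3, γ_{n−1} : n−2 → n−1, γ_n : n−2 → n, β_{n−1} : n−1 → 1, β_n : n → 1, and I is the two-sided ideal generated by: β_{n−1}γ_{n−1} − β_nγ_n; the cycles α_i⋯α_1 β_n γ_n α_{n−3}⋯α_i for all i; γ_n α_{n−3}⋯α_1 β_{n−1}; and γ_{n−1} α_{n−3}⋯α_1 β_n (paths composed right-to-left). -/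
/-!
The paths of `Γ` form a basis of `KΓ`: they span because they are closed under multiplication,
and they are independent because `KΓ` sends them to distinct matrix units. So `T(KΓ)` has the
basis `(x, 0)`, `(0, x^∨)`, `x` running over the paths, with an explicit multiplication table.
In `KQ/I` the same table is satisfied by the paths of `Γ ⊆ Q` together with, for each path
`k → l`, the path `l → ⋯ → 1 → ⋯ → k` through `β_{n-1}` or `β_n`: the relations of `I` are
exactly what kills the products of these that are not again of this form. Any family satisfying
the table satisfies the relations of `KQ/I`, which yields an algebra map `KQ/I → T(KΓ)` sending
the second family, which spans `KQ/I`, onto the basis of `T(KΓ)`; so the map is bijective.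
-/

/-- The product `α_{i+m−1} ⋯ α_{i+1} α_i` of `m` consecutive arrows, composed
right-to-left (so `chainProd α i m` is a path starting at the vertex `i`). -/
def chainProd {R : Type} [Ring R] (α : ℕ → R) (i : ℕ) : ℕ → R
  | 0 => 1
  | m + 1 => α (i + m) * chainProd α i m

section ChainProd

variable {R S F : Type} [Ring R] [Ring S] [FunLike F R S] [RingHomClass F R S]

theorem chainProd_congr {α β : ℕ → R} {i : ℕ} :
    ∀ {m}, (∀ k < m, α (i + k) = β (i + k)) → chainProd α i m = chainProd β i m
  | 0, _ => rfl
  | m + 1, h => by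
    simp only [chainProd, h m m.lt_succ_self,
      chainProd_congr fun k hk => h k (hk.trans m.lt_succ_self)]

theorem chainProd_add (α : ℕ → R) (i k : ℕ) :
    ∀ m, chainProd α i (k + m) = chainProd α (i + k) m * chainProd α i k
  | 0 => (one_mul _).symm
  | m + 1 => by
    rw [← add_assoc, chainProd, chainProd, chainProd_add α i k m, mul_assoc, add_assoc]

theorem map_chainProd (f : F) (α : ℕ → R) (i : ℕ) :
    ∀ m, f (chainProd α i m) = chainProd (fun k => f (α k)) i m
  | 0 => map_one f
  | m + 1 => by rw [chainProd, chainProd, map_mul, map_chainProd f α i m]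

end ChainProd

section LinearAlgebra

variable {K : Type} [CommRing K] {A : Type} [Ring A] [Algebra K A]

theorem Subalgebra.eq_top_of_val_comp_eq_id (S : Subalgebra K A) (f : A →ₐ[K] S)
    (hf : S.val.comp f = AlgHom.id K A) : S = ⊤ :=
  eq_top_iff.2 fun x _ => by
    rw [← AlgHom.id_apply (R := K) x, ← hf]
    exact (f x).2

theorem Submodule.span_eq_top_of_mul_mem {t : Set A} (h₁ : (1 : A) ∈ Submodule.span K t)
    (hmul : ∀ x ∈ t, ∀ y ∈ t, x * y ∈ Submodule.span K t)
    (htop : ∀ S : Subalgebra K A, Submodule.span K t ≤ Subalgebra.toSubmodule S → S = ⊤) :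
    Submodule.span K t = ⊤ := by
  have hle : Submodule.span K t * Submodule.span K t ≤ Submodule.span K t := by
    rw [Submodule.span_mul_span]
    exact Submodule.span_le.2 fun _ ⟨x, hx, y, hy, hxy⟩ => hxy ▸ hmul x hx y hy
  have := htop ((Submodule.span K t).toSubalgebra h₁ fun x y hx hy =>
    hle (Submodule.mul_mem_mul hx hy)) le_rfl
  rwa [← Algebra.toSubmodule_eq_top, Submodule.toSubalgebra_toSubmodule] at this

theorem LinearMap.bijective_of_apply_eq_basis {ι M N : Type} [AddCommGroup M] [Module K M]
    [AddCommGroup N] [Module K N] (f : M →ₗ[K] N) {v : ι → M}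
    (hv : Submodule.span K (Set.range v) = ⊤) (b : Module.Basis ι K N) (hfv : ∀ i, f (v i) = b i) :
    Function.Bijective f := by
  have hli : LinearIndependent K v :=
    LinearIndependent.of_comp f (by convert b.linearIndependent; exact funext hfv)
  let bv := Module.Basis.mk hli hv.ge
  have hf : f = (bv.equiv b (Equiv.refl ι)).toLinearMap :=
    bv.ext fun i => by
      rw [LinearEquiv.coe_coe, Module.Basis.equiv_apply, Module.Basis.mk_apply, hfv,
        Equiv.refl_apply]
  rw [hf]
  exact (bv.equiv b _).bijective

end LinearAlgebra

section TrivialExtension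

variable {K C E : Type} [CommRing K] [Ring C] [Algebra K C] [Ring E] [Algebra K E]

structure IsTrivialExtension (ι : E ≃ₗ[K] C × Module.Dual K C) : Prop where
  map_one : ι 1 = (1, 0)
  map_mul : ∀ u v : E, ι (u * v) =
    ((ι u).1 * (ι v).1,
      (ι v).2 ∘ₗ LinearMap.mulRight K (ι u).1 + (ι u).2 ∘ₗ LinearMap.mulLeft K (ι v).1)

namespace IsTrivialExtension

variable {ι : E ≃ₗ[K] C × Module.Dual K C} (hE : IsTrivialExtension ι)
include hE

theorem symm_mul_symm (x y : C) (f g : Module.Dual K C) :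
    ι.symm (x, f) * ι.symm (y, g) =
      ι.symm (x * y, g ∘ₗ LinearMap.mulRight K x + f ∘ₗ LinearMap.mulLeft K y) :=
  ι.injective (by simp only [hE.map_mul, LinearEquiv.apply_symm_apply])

def inl : C →ₐ[K] E :=
  AlgHom.ofLinearMap (ι.symm.toLinearMap ∘ₗ LinearMap.inl K C _)
    (by simp [← hE.map_one])
    fun x y => by simp [hE.symm_mul_symm]

theorem inl_apply (x : C) : hE.inl x = ι.symm (x, 0) := rfl

theorem inl_mul_inr (x : C) (f : Module.Dual K C) :
    hE.inl x * ι.symm (0, f) = ι.symm (0, f ∘ₗ LinearMap.mulRight K x) := by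
  simp [inl_apply, hE.symm_mul_symm]

theorem inr_mul_inl (f : Module.Dual K C) (y : C) :
    ι.symm (0, f) * hE.inl y = ι.symm (0, f ∘ₗ LinearMap.mulLeft K y) := by
  simp [inl_apply, hE.symm_mul_symm]

theorem inr_mul_inr (f g : Module.Dual K C) : ι.symm (0, f) * ι.symm (0, g) = 0 := by
  simp [hE.symm_mul_symm]

end IsTrivialExtension

end TrivialExtension

namespace DnQuiver

abbrev HasPath (n i j : ℕ) : Prop :=
  1 ≤ i ∧ ((i ≤ j ∧ j ≤ n - 2) ∨ ((j = n - 1 ∨ j = n) ∧ (i ≤ n - 2 ∨ i = j)))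

theorem HasPath.trans {n i j l : ℕ} (h₁ : HasPath n i j) (h₂ : HasPath n j l) :
    HasPath n i l := by
  omega

theorem hasPath_self {n i : ℕ} (h₁ : 1 ≤ i) (h₂ : i ≤ n) : HasPath n i i := by omega

def paths (n : ℕ) : Finset (ℕ × ℕ) :=
  {p ∈ Finset.Icc 1 n ×ˢ Finset.Icc 1 n | HasPath n p.1 p.2}

theorem mem_paths {n : ℕ} {p : ℕ × ℕ} : p ∈ paths n ↔ HasPath n p.1 p.2 := by
  simp only [paths, Finset.mem_filter, Finset.mem_product, Finset.mem_Icc, and_iff_right_iff_imp]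
  omega

variable {R : Type} [Ring R]

/-- The vertices `1, …, n-2` form the long arm, `n-1` and `n` the two short arms at `n-2`; the
path from `i` to `j` is the product of the arrows along it times the idempotent at `i` (a junk
value unless `HasPath n i j`). -/
def path (n : ℕ) (e α : ℕ → R) (i j : ℕ) : R :=
  if j ≤ n - 2 then chainProd α i (j - i) * e i
  else if i = j then e i
  else α (j - 1) * (chainProd α i (n - 2 - i) * e i)

theorem path_of_le {n : ℕ} (e α : ℕ → R) {i j : ℕ} (hj : j ≤ n - 2) :
    path n e α i j = chainProd α i (j - i) * e i := if_pos hj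

theorem path_of_top {n : ℕ} (e α : ℕ → R) {i j : ℕ} (hi : i ≤ n - 2) (hj : n - 2 < j) :
    path n e α i j = α (j - 1) * path n e α i (n - 2) := by
  rw [path, if_neg (by omega), if_neg (by omega), path_of_le e α le_rfl]

theorem path_top_self {n : ℕ} (e α : ℕ → R) {j : ℕ} (hj : n - 2 < j) :
    path n e α j j = e j := by
  rw [path, if_neg (by omega), if_pos rfl]

theorem path_self {n : ℕ} (e α : ℕ → R) (i : ℕ) : path n e α i i = e i := by
  by_cases hi : i ≤ n - 2
  · rw [path_of_le e α hi, Nat.sub_self, chainProd, one_mul]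
  · exact path_top_self e α (by omega)

theorem map_path {S F : Type} [Ring S] [FunLike F R S] [RingHomClass F R S] (f : F) (n : ℕ)
    (e α : ℕ → R) (i j : ℕ) :
    f (path n e α i j) = path n (fun k => f (e k)) (fun k => f (α k)) i j := by
  unfold path
  split_ifs <;> simp only [map_mul, map_chainProd]

structure PathRelations (n : ℕ) (e α : ℕ → R) : Prop where
  e_eq_zero : ∀ i, ¬ (1 ≤ i ∧ i ≤ n) → e i = 0
  α_eq_zero : ∀ i, ¬ (1 ≤ i ∧ i ≤ n - 1) → α i = 0
  e_mul_self : ∀ i, e i * e i = e i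
  e_mul_e : ∀ i j, i ≠ j → e i * e j = 0
  sum_e : ∑ i ∈ Finset.Icc 1 n, e i = 1
  arrow : ∀ i, 1 ≤ i → i ≤ n - 3 → e (i + 1) * α i = α i ∧ α i * e i = α i
  arrow_sub_two : e (n - 1) * α (n - 2) = α (n - 2) ∧ α (n - 2) * e (n - 2) = α (n - 2)
  arrow_sub_one : e n * α (n - 1) = α (n - 1) ∧ α (n - 1) * e (n - 2) = α (n - 1)

namespace PathRelations

variable {n : ℕ} {e α : ℕ → R}

theorem of_injective {S F : Type} [Ring S] [FunLike F R S] [RingHomClass F R S] {f : F}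
    (hf : Function.Injective f) (h : PathRelations n (fun i => f (e i)) (fun i => f (α i))) :
    PathRelations n e α where
  e_eq_zero i hi := hf (by simpa using h.e_eq_zero i hi)
  α_eq_zero i hi := hf (by simpa using h.α_eq_zero i hi)
  e_mul_self i := hf (by simpa using h.e_mul_self i)
  e_mul_e i j hij := hf (by simpa using h.e_mul_e i j hij)
  sum_e := hf (by simpa using h.sum_e)
  arrow i h₁ h₂ :=
    ⟨hf (by simpa using (h.arrow i h₁ h₂).1), hf (by simpa using (h.arrow i h₁ h₂).2)⟩
  arrow_sub_two := ⟨hf (by simpa using h.arrow_sub_two.1), hf (by simpa using h.arrow_sub_two.2)⟩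
  arrow_sub_one := ⟨hf (by simpa using h.arrow_sub_one.1), hf (by simpa using h.arrow_sub_one.2)⟩

variable (h : PathRelations n e α) (hn : 4 ≤ n)
include h

theorem path_mul_e_self (i j : ℕ) : path n e α i j * e i = path n e α i j := by
  unfold path
  split_ifs <;> simp only [mul_assoc, h.e_mul_self]

theorem e_mul_chainProd {i m : ℕ} (hi : 1 ≤ i) (him : i + m ≤ n - 2) :
    e (i + m) * (chainProd α i m * e i) = chainProd α i m * e i := by
  cases m with
  | zero => simp only [chainProd, add_zero, one_mul, h.e_mul_self]
  | succ m =>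
    rw [chainProd, ← mul_assoc, ← mul_assoc, ← add_assoc, (h.arrow (i + m) (by omega) (by omega)).1]

theorem path_comp_of_le {i j l : ℕ} (hi : 1 ≤ i) (hij : i ≤ j) (hjl : j ≤ l) (hl : l ≤ n - 2) :
    path n e α j l * path n e α i j = path n e α i l := by
  obtain ⟨m, rfl⟩ := Nat.exists_eq_add_of_le hij
  obtain ⟨m', rfl⟩ := Nat.exists_eq_add_of_le hjl
  rw [path_of_le e α hl, path_of_le e α (hjl.trans hl), path_of_le e α hl]
  rw [Nat.add_sub_cancel_left, Nat.add_sub_cancel_left, add_assoc i m m', Nat.add_sub_cancel_left,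
    mul_assoc, h.e_mul_chainProd hi (by omega), ← mul_assoc, ← chainProd_add]

theorem e_mul_path_self {i j : ℕ} (hij : HasPath n i j) :
    e j * path n e α i j = path n e α i j := by
  by_cases hj : j ≤ n - 2
  · rw [path_of_le e α hj]
    simpa [show i + (j - i) = j by omega] using h.e_mul_chainProd (m := j - i) hij.1 (by omega)
  · by_cases hij' : i = j
    · rw [hij', path_top_self e α (by omega), h.e_mul_self]
    · rw [path_of_top e α (by omega) (by omega), ← mul_assoc]
      rcases (by omega : j = n - 1 ∨ j = n) with rfl | rfl
      · rw [show n - 1 - 1 = n - 2 by omega, h.arrow_sub_two.1]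
      · rw [h.arrow_sub_one.1]

theorem path_comp {i j l : ℕ} (hij : HasPath n i j) (hjl : HasPath n j l) :
    path n e α j l * path n e α i j = path n e α i l := by
  by_cases hl : l ≤ n - 2
  · exact h.path_comp_of_le hij.1 (by omega) (by omega) hl
  by_cases hjl' : j = l
  · subst hjl'; rw [path_self, h.e_mul_path_self hij]
  have hj : j ≤ n - 2 := by omega
  rw [path_of_top e α hj (by omega), path_of_top e α (i := i) (j := l) (by omega) (by omega),
    mul_assoc, h.path_comp_of_le hij.1 (by omega) hj le_rfl]

theorem path_mul_path {i j k l : ℕ} (hij : HasPath n i j) (hkl : HasPath n k l) :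
    path n e α k l * path n e α i j = if j = k then path n e α i l else 0 := by
  split_ifs with hjk
  · subst hjk; exact h.path_comp hij hkl
  · rw [← h.path_mul_e_self k l, ← h.e_mul_path_self hij, mul_assoc, ← mul_assoc (e k),
      h.e_mul_e k j (Ne.symm hjk), zero_mul, mul_zero]

theorem path_succ {i : ℕ} (h₁ : 1 ≤ i) (h₂ : i ≤ n - 3) : path n e α i (i + 1) = α i := by
  rw [path_of_le e α (by omega), Nat.add_sub_cancel_left, chainProd, chainProd, add_zero, mul_one,
    (h.arrow i h₁ h₂).2]

include hn

theorem path_sub_two_sub_one : path n e α (n - 2) (n - 1) = α (n - 2) := by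
  rw [path_of_top e α le_rfl (by omega), path_self, show n - 1 - 1 = n - 2 by omega,
    h.arrow_sub_two.2]

theorem path_sub_two_top : path n e α (n - 2) n = α (n - 1) := by
  rw [path_of_top e α le_rfl (by omega), path_self, h.arrow_sub_one.2]

end PathRelations

/-- The arrows of `Γ ⊆ Q`, numbered like the arrows `a i` of `Γ`. -/
def mergeArrows (n : ℕ) (αq : ℕ → R) (γ₁ γ₂ : R) (i : ℕ) : R :=
  if i = n - 2 then γ₁ else if i = n - 1 then γ₂ else αq i

theorem map_mergeArrows {S F : Type} [Ring S] [FunLike F R S] [RingHomClass F R S] (f : F)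
    (n : ℕ) (αq : ℕ → R) (γ₁ γ₂ : R) (i : ℕ) :
    f (mergeArrows n αq γ₁ γ₂ i) = mergeArrows n (fun k => f (αq k)) (f γ₁) (f γ₂) i := by
  unfold mergeArrows
  split_ifs <;> rfl

omit [Ring R] in
theorem mergeArrows_sub_two {n : ℕ} (αq : ℕ → R) (γ₁ γ₂ : R) :
    mergeArrows n αq γ₁ γ₂ (n - 2) = γ₁ :=
  if_pos rfl

omit [Ring R] in
theorem mergeArrows_sub_one {n : ℕ} (hn : 2 ≤ n) (αq : ℕ → R) (γ₁ γ₂ : R) :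
    mergeArrows n αq γ₁ γ₂ (n - 1) = γ₂ := by
  rw [mergeArrows, if_neg (by omega), if_pos rfl]

theorem chainProd_mergeArrows {n : ℕ} (αq : ℕ → R) (γ₁ γ₂ : R) {i m : ℕ} (him : i + m ≤ n - 2) :
    chainProd (mergeArrows n αq γ₁ γ₂) i m = chainProd αq i m :=
  chainProd_congr fun k hk => by unfold mergeArrows; rw [if_neg (by omega), if_neg (by omega)]

def returnPath (n : ℕ) (e α : ℕ → R) (β₁ β₂ : R) (l : ℕ) : R :=
  if HasPath n l n then β₂ * path n e α l n else β₁ * path n e α l (n - 1)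

/-- For a path `k → l`, the path `l → ⋯ → 1 → ⋯ → k` running back through `β₁` or `β₂`. -/
def dualPath (n : ℕ) (e α : ℕ → R) (β₁ β₂ : R) (k l : ℕ) : R :=
  path n e α 1 k * returnPath n e α β₁ β₂ l

theorem map_dualPath {S F : Type} [Ring S] [FunLike F R S] [RingHomClass F R S] (f : F) (n : ℕ)
    (e α : ℕ → R) (β₁ β₂ : R) (k l : ℕ) :
    f (dualPath n e α β₁ β₂ k l) =
      dualPath n (fun i => f (e i)) (fun i => f (α i)) (f β₁) (f β₂) k l := by
  unfold dualPath returnPath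
  split_ifs <;> simp only [map_mul, map_path]

/-- `p i j` stands for the path `i → j` and `d k l` for the dual of the path `k → l`: the fields
are the multiplication table of the basis `(x, 0)`, `(0, x^∨)` of `T(KΓ)`, `x` a path of `Γ`. -/
structure IsMulTable (n : ℕ) (p d : ℕ → ℕ → R) : Prop where
  sum_diag : ∑ i ∈ Finset.Icc 1 n, p i i = 1
  mul_pp : ∀ {i j k l}, HasPath n i j → HasPath n k l →
    p k l * p i j = if j = k then p i l else 0
  mul_pd : ∀ {i j k l}, HasPath n i j → HasPath n k l →
    p i j * d k l = if k = i ∧ HasPath n j l then d j l else 0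
  mul_dp : ∀ {i j k l}, HasPath n i j → HasPath n k l →
    d k l * p i j = if l = j ∧ HasPath n k i then d k i else 0
  mul_dd : ∀ {i j k l}, HasPath n i j → HasPath n k l → d k l * d i j = 0

/-- The relations of `KQ/I`, with `γ₁ = γ_{n-1}`, `γ₂ = γ_n`, `β₁ = β_{n-1}`, `β₂ = β_n`. -/
structure TrivExtRelations (n : ℕ) (κ αq : ℕ → R) (γ₁ γ₂ β₁ β₂ : R) : Prop where
  κ_eq_zero : ∀ i, ¬ (1 ≤ i ∧ i ≤ n) → κ i = 0
  α_eq_zero : ∀ i, ¬ (1 ≤ i ∧ i ≤ n - 3) → αq i = 0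
  κ_mul_self : ∀ i, κ i * κ i = κ i
  κ_mul_κ : ∀ i j, i ≠ j → κ i * κ j = 0
  sum_κ : ∑ i ∈ Finset.Icc 1 n, κ i = 1
  arrow : ∀ i, 1 ≤ i → i ≤ n - 3 → κ (i + 1) * αq i = αq i ∧ αq i * κ i = αq i
  γ₁_comp : κ (n - 1) * γ₁ = γ₁ ∧ γ₁ * κ (n - 2) = γ₁
  γ₂_comp : κ n * γ₂ = γ₂ ∧ γ₂ * κ (n - 2) = γ₂
  β₁_comp : κ 1 * β₁ = β₁ ∧ β₁ * κ (n - 1) = β₁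
  β₂_comp : κ 1 * β₂ = β₂ ∧ β₂ * κ n = β₂
  rel_comm : β₁ * γ₁ - β₂ * γ₂ = 0
  rel_cycle : ∀ i, 1 ≤ i → i ≤ n - 3 →
    chainProd αq 1 i * β₂ * γ₂ * chainProd αq i (n - 2 - i) = 0
  rel_γ₂_β₁ : γ₂ * chainProd αq 1 (n - 3) * β₁ = 0
  rel_γ₁_β₂ : γ₁ * chainProd αq 1 (n - 3) * β₂ = 0

namespace TrivExtRelations

variable {n : ℕ} {κ αq : ℕ → R} {γ₁ γ₂ β₁ β₂ : R}

theorem of_injective {S F : Type} [Ring S] [FunLike F R S] [RingHomClass F R S] {f : F}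
    (hf : Function.Injective f)
    (h : TrivExtRelations n (fun i => f (κ i)) (fun i => f (αq i)) (f γ₁) (f γ₂) (f β₁) (f β₂)) :
    TrivExtRelations n κ αq γ₁ γ₂ β₁ β₂ where
  κ_eq_zero i hi := hf (by simpa using h.κ_eq_zero i hi)
  α_eq_zero i hi := hf (by simpa using h.α_eq_zero i hi)
  κ_mul_self i := hf (by simpa using h.κ_mul_self i)
  κ_mul_κ i j hij := hf (by simpa using h.κ_mul_κ i j hij)
  sum_κ := hf (by simpa using h.sum_κ)
  arrow i h₁ h₂ :=
    ⟨hf (by simpa using (h.arrow i h₁ h₂).1), hf (by simpa using (h.arrow i h₁ h₂).2)⟩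
  γ₁_comp := ⟨hf (by simpa using h.γ₁_comp.1), hf (by simpa using h.γ₁_comp.2)⟩
  γ₂_comp := ⟨hf (by simpa using h.γ₂_comp.1), hf (by simpa using h.γ₂_comp.2)⟩
  β₁_comp := ⟨hf (by simpa using h.β₁_comp.1), hf (by simpa using h.β₁_comp.2)⟩
  β₂_comp := ⟨hf (by simpa using h.β₂_comp.1), hf (by simpa using h.β₂_comp.2)⟩
  rel_comm := hf (by simpa using h.rel_comm)
  rel_cycle i h₁ h₂ := hf (by simpa [map_chainProd] using h.rel_cycle i h₁ h₂)
  rel_γ₂_β₁ := hf (by simpa [map_chainProd] using h.rel_γ₂_β₁)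
  rel_γ₁_β₂ := hf (by simpa [map_chainProd] using h.rel_γ₁_β₂)

variable (h : TrivExtRelations n κ αq γ₁ γ₂ β₁ β₂) (hn : 4 ≤ n)
include h hn

theorem pathRelations : PathRelations n κ (mergeArrows n αq γ₁ γ₂) where
  e_eq_zero := h.κ_eq_zero
  α_eq_zero i hi := by
    unfold mergeArrows; rw [if_neg (by omega), if_neg (by omega), h.α_eq_zero i (by omega)]
  e_mul_self := h.κ_mul_self
  e_mul_e := h.κ_mul_κ
  sum_e := h.sum_κ
  arrow i h₁ h₂ := by
    unfold mergeArrows; rw [if_neg (by omega), if_neg (by omega)]; exact h.arrow i h₁ h₂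
  arrow_sub_two := by rw [mergeArrows_sub_two]; exact h.γ₁_comp
  arrow_sub_one := by rw [mergeArrows_sub_one (by omega)]; exact h.γ₂_comp

local notation "ᾱ" => mergeArrows n αq γ₁ γ₂

theorem β₁_mul_path {i : ℕ} (hi : i ≤ n - 2) :
    β₁ * path n κ ᾱ i (n - 1) = β₂ * path n κ ᾱ i n := by
  rw [path_of_top κ ᾱ (j := n - 1) hi (by omega), path_of_top κ ᾱ (j := n) hi (by omega),
    show n - 1 - 1 = n - 2 by omega, mergeArrows_sub_two, mergeArrows_sub_one (by omega),
    ← mul_assoc, ← mul_assoc, sub_eq_zero.1 h.rel_comm]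

theorem path_mul_β₂_mul_path {l : ℕ} (h₁ : 1 ≤ l) (h₂ : l ≤ n - 3) :
    path n κ ᾱ 1 (l + 1) * (β₂ * path n κ ᾱ l n) = 0 := by
  rw [path_of_top κ ᾱ (j := n) (by omega) (by omega), path_of_le κ ᾱ (j := l + 1) (by omega),
    path_of_le κ ᾱ le_rfl, mergeArrows_sub_one (by omega), Nat.add_sub_cancel,
    chainProd_mergeArrows _ _ _ (by omega), chainProd_mergeArrows _ _ _ (by omega), mul_assoc, ← mul_assoc (κ 1), h.β₂_comp.1]
  simp only [← mul_assoc, h.rel_cycle l h₁ h₂, zero_mul]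

theorem path_top_mul_β₁ : path n κ ᾱ 1 n * β₁ = 0 := by
  rw [path_of_top κ ᾱ (by omega) (by omega), path_of_le κ ᾱ le_rfl, mergeArrows_sub_one (by omega),
    chainProd_mergeArrows _ _ _ (by omega), show n - 2 - 1 = n - 3 by omega, mul_assoc, mul_assoc,
    h.β₁_comp.1, ← mul_assoc, h.rel_γ₂_β₁]

theorem path_sub_one_mul_β₂ : path n κ ᾱ 1 (n - 1) * β₂ = 0 := by
  rw [path_of_top κ ᾱ (by omega) (by omega), path_of_le κ ᾱ le_rfl,
    show n - 1 - 1 = n - 2 by omega, mergeArrows_sub_two,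
    chainProd_mergeArrows _ _ _ (by omega), show n - 2 - 1 = n - 3 by omega, mul_assoc, mul_assoc,
    h.β₂_comp.1, ← mul_assoc, h.rel_γ₁_β₂]

theorem returnPath_mul_path {i j l : ℕ} (hij : HasPath n i j) (hl₁ : 1 ≤ l) (hl₂ : l ≤ n) :
    returnPath n κ ᾱ β₁ β₂ l * path n κ ᾱ i j =
      if l = j then returnPath n κ ᾱ β₁ β₂ i else 0 := by
  have hP := h.pathRelations hn
  unfold returnPath
  by_cases hln : HasPath n l n
  · rw [if_pos hln, mul_assoc, hP.path_mul_path hij hln]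
    by_cases hjl : j = l
    · rw [if_pos hjl, if_pos hjl.symm, if_pos (hij.trans (hjl ▸ hln))]
    · rw [if_neg hjl, if_neg (Ne.symm hjl), mul_zero]
  · rw [if_neg hln, mul_assoc, hP.path_mul_path hij (by omega)]
    by_cases hjl : j = l
    · rw [if_pos hjl, if_pos hjl.symm]
      split_ifs with hin
      · exact h.β₁_mul_path hn (by omega)
      · rfl
    · rw [if_neg hjl, if_neg (Ne.symm hjl), mul_zero]

theorem path_mul_returnPath_eq_zero {j l : ℕ} (hj₁ : 1 ≤ j) (hj₂ : j ≤ n) (hl₁ : 1 ≤ l)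
    (hl₂ : l ≤ n) (hjl : ¬ HasPath n j l) : path n κ ᾱ 1 j * returnPath n κ ᾱ β₁ β₂ l = 0 := by
  have hP := h.pathRelations hn
  unfold returnPath
  by_cases hln : HasPath n l n
  · rw [if_pos hln]
    by_cases hl : l ≤ n - 2
    · by_cases hj : j ≤ n - 2
      · rw [← hP.path_comp (j := l + 1) (by omega) (by omega), mul_assoc,
          h.path_mul_β₂_mul_path hn hl₁ (by omega), mul_zero]
      · rcases (by omega : j = n - 1 ∨ j = n) with rfl | rfl
        · rw [← mul_assoc, h.path_sub_one_mul_β₂ hn, zero_mul]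
        · rw [← h.β₁_mul_path hn hl, ← mul_assoc, h.path_top_mul_β₁ hn, zero_mul]
    · obtain rfl : j = n - 1 := by omega
      rw [← mul_assoc, h.path_sub_one_mul_β₂ hn, zero_mul]
  · obtain rfl : j = n := by omega
    rw [if_neg hln, ← mul_assoc, h.path_top_mul_β₁ hn, zero_mul]

theorem returnPath_one_mul_returnPath {j : ℕ} (hj₁ : 1 ≤ j) (hj₂ : j ≤ n) :
    returnPath n κ ᾱ β₁ β₂ 1 * returnPath n κ ᾱ β₁ β₂ j = 0 := by
  have h1 : returnPath n κ ᾱ β₁ β₂ 1 = β₂ * path n κ ᾱ 1 n := if_pos (by omega)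
  by_cases hjn : j = n
  · rw [h1, ← h.β₁_mul_path hn (by omega), mul_assoc, h.path_mul_returnPath_eq_zero hn
      (j := n - 1) (by omega) (by omega) hj₁ hj₂ (by omega), mul_zero]
  · rw [h1, mul_assoc, h.path_mul_returnPath_eq_zero hn (j := n) (by omega) le_rfl hj₁ hj₂
      (by omega), mul_zero]

theorem dualPath_one_sub_one : dualPath n κ ᾱ β₁ β₂ 1 (n - 1) = β₁ := by
  rw [dualPath, returnPath, if_neg (by omega), path_self, path_self, ← mul_assoc,
    h.β₁_comp.1, h.β₁_comp.2]

theorem dualPath_one_top : dualPath n κ ᾱ β₁ β₂ 1 n = β₂ := by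
  rw [dualPath, returnPath, if_pos (by omega), path_self, path_self, ← mul_assoc,
    h.β₂_comp.1, h.β₂_comp.2]

theorem isMulTable : IsMulTable n (path n κ ᾱ) (dualPath n κ ᾱ β₁ β₂) where
  sum_diag := by simp only [path_self, h.sum_κ]
  mul_pp := (h.pathRelations hn).path_mul_path
  mul_pd {i j k l} hij hkl := by
    have hP := h.pathRelations hn
    rw [dualPath, ← mul_assoc, hP.path_mul_path (by omega) hij]
    by_cases hik : k = i
    · rw [if_pos hik]
      split_ifs with hjl
      · rfl
      · exact h.path_mul_returnPath_eq_zero hn (by omega) (by omega) (by omega) (by omega)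
          fun h' => hjl ⟨hik, h'⟩
    · rw [if_neg hik, if_neg fun h' => hik h'.1, zero_mul]
  mul_dp {i j k l} hij hkl := by
    rw [dualPath, mul_assoc, h.returnPath_mul_path hn hij (by omega) (by omega)]
    by_cases hlj : l = j
    · rw [if_pos hlj]
      split_ifs with hki
      · rfl
      · exact h.path_mul_returnPath_eq_zero hn (by omega) (by omega) (by omega) (by omega)
          fun h' => hki ⟨hlj, h'⟩
    · rw [if_neg hlj, if_neg fun h' => hlj h'.1, mul_zero]
  mul_dd {i j k l} hij hkl := by
    rw [dualPath, dualPath, mul_assoc, ← mul_assoc (returnPath _ _ _ _ _ l),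
      h.returnPath_mul_path hn (by omega) (by omega) (by omega)]
    split_ifs
    · rw [h.returnPath_one_mul_returnPath hn (by omega) (by omega), mul_zero]
    · rw [zero_mul, mul_zero]

end TrivExtRelations

def tableVertex (n : ℕ) (p : ℕ → ℕ → R) (i : ℕ) : R := if 1 ≤ i ∧ i ≤ n then p i i else 0

def tableArrow (n : ℕ) (p : ℕ → ℕ → R) (i : ℕ) : R := if 1 ≤ i ∧ i ≤ n - 3 then p i (i + 1) else 0

namespace IsMulTable

variable {n : ℕ} {p d : ℕ → ℕ → R} (t : IsMulTable n p d) (hn : 4 ≤ n)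
include t

theorem chainProd_tableArrow {i m : ℕ} (hi : 1 ≤ i) (hm : 1 ≤ m) (him : i + m ≤ n - 2) :
    chainProd (tableArrow n p) i m = p i (i + m) := by
  induction m, hm using Nat.le_induction with
  | base => rw [chainProd, chainProd, add_zero, mul_one, tableArrow, if_pos ⟨hi, by omega⟩]
  | succ m hm ih =>
    rw [chainProd, ih (by omega), tableArrow, if_pos ⟨by omega, by omega⟩,
      t.mul_pp (by omega) (by omega), if_pos rfl, add_assoc]

include hn

theorem trivExtRelations :
    TrivExtRelations n (tableVertex n p) (tableArrow n p) (p (n - 2) (n - 1)) (p (n - 2) n)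
      (d 1 (n - 1)) (d 1 n) where
  κ_eq_zero i hi := if_neg hi
  α_eq_zero i hi := if_neg hi
  κ_mul_self i := by
    unfold tableVertex
    split_ifs <;> simp (disch := omega) [t.mul_pp]
  κ_mul_κ i j hij := by
    unfold tableVertex
    split_ifs <;> simp (disch := omega) [t.mul_pp, hij.symm]
  sum_κ := by
    rw [← t.sum_diag]
    exact Finset.sum_congr rfl fun i hi => if_pos (Finset.mem_Icc.1 hi)
  arrow i h₁ h₂ := by simp (disch := omega) [tableVertex, tableArrow, if_pos, t.mul_pp]
  γ₁_comp := by simp (disch := omega) [tableVertex, if_pos, t.mul_pp]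
  γ₂_comp := by simp (disch := omega) [tableVertex, if_pos, t.mul_pp]
  β₁_comp := by simp (disch := omega) [tableVertex, if_pos, t.mul_pd, t.mul_dp]
  β₂_comp := by simp (disch := omega) [tableVertex, if_pos, t.mul_pd, t.mul_dp]
  rel_comm := by simp (disch := omega) [if_pos, t.mul_dp]
  rel_cycle i h₁ h₂ := by
    rw [t.chainProd_tableArrow le_rfl h₁ (by omega),
      t.chainProd_tableArrow h₁ (by omega) (by omega)]
    simp (disch := omega) [if_pos, if_neg, t.mul_pd, t.mul_dp]
  rel_γ₂_β₁ := by
    rw [t.chainProd_tableArrow le_rfl (by omega) (by omega)]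
    simp (disch := omega) [if_pos, if_neg, t.mul_pp, t.mul_pd]
  rel_γ₁_β₂ := by
    rw [t.chainProd_tableArrow le_rfl (by omega) (by omega)]
    simp (disch := omega) [if_pos, if_neg, t.mul_pp, t.mul_pd]

local notation "ᾱ" => mergeArrows n (tableArrow n p) (p (n - 2) (n - 1)) (p (n - 2) n)

theorem path_eq {i j : ℕ} (hij : HasPath n i j) :
    path n (tableVertex n p) ᾱ i j = p i j := by
  have low : ∀ {i j}, HasPath n i j → j ≤ n - 2 → path n (tableVertex n p) ᾱ i j = p i j := by
    intro i j hij hj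
    have hij' : i ≤ j := by omega
    rw [path_of_le _ _ hj, chainProd_mergeArrows _ _ _ (by omega), tableVertex,
      if_pos ⟨hij.1, by omega⟩]
    rcases Nat.eq_or_lt_of_le hij' with rfl | hlt
    · rw [Nat.sub_self, chainProd, one_mul]
    · rw [t.chainProd_tableArrow hij.1 (by omega) (by omega), show i + (j - i) = j by omega,
        t.mul_pp (hasPath_self hij.1 (by omega)) hij, if_pos rfl]
  by_cases hj : j ≤ n - 2
  · exact low hij hj
  by_cases hij' : i = j
  · rw [hij', path_top_self _ _ (by omega), tableVertex, if_pos ⟨by omega, by omega⟩]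
  have hi : i ≤ n - 2 := by omega
  have hα : ᾱ (j - 1) = p (n - 2) j := by
    unfold mergeArrows
    rcases (by omega : j = n - 1 ∨ j = n) with rfl | rfl
    · rw [if_pos (by omega)]
    · rw [if_neg (by omega), if_pos rfl]
  rw [path_of_top _ _ hi (by omega), low (by omega) le_rfl, hα,
    t.mul_pp (by omega) (by omega), if_pos rfl]

theorem dualPath_eq {k l : ℕ} (hkl : HasPath n k l) :
    dualPath n (tableVertex n p) ᾱ (d 1 (n - 1)) (d 1 n) k l = d k l := by
  have hret : returnPath n (tableVertex n p) ᾱ (d 1 (n - 1)) (d 1 n) l = d 1 l := by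
    unfold returnPath
    split_ifs with hln
    · rw [t.path_eq hn hln, t.mul_dp hln (by omega), if_pos ⟨rfl, by omega⟩]
    · obtain rfl : l = n - 1 := by omega
      rw [t.path_eq hn (hasPath_self (by omega) (by omega)),
        t.mul_dp (hasPath_self (by omega) (by omega)) (by omega),
        if_pos ⟨rfl, by omega⟩]
  rw [dualPath, hret, t.path_eq hn (by omega), t.mul_pd (by omega) (by omega), if_pos ⟨rfl, hkl⟩]

section Map

variable {A F : Type} [Ring A] [FunLike F A R] [RingHomClass F A R] (f : F) {κ αq : ℕ → A}
  {γ₁ γ₂ β₁ β₂ : A} (hκ : ∀ i, f (κ i) = tableVertex n p i) (hα : ∀ i, f (αq i) = tableArrow n p i)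
  (hγ₁ : f γ₁ = p (n - 2) (n - 1)) (hγ₂ : f γ₂ = p (n - 2) n)
include hκ hα hγ₁ hγ₂

theorem map_path_eq {i j : ℕ} (hij : HasPath n i j) :
    f (path n κ (mergeArrows n αq γ₁ γ₂) i j) = p i j := by
  simp only [map_path, map_mergeArrows, hκ, hα, hγ₁, hγ₂]
  exact t.path_eq hn hij

theorem map_dualPath_eq (hβ₁ : f β₁ = d 1 (n - 1)) (hβ₂ : f β₂ = d 1 n) {k l : ℕ}
    (hkl : HasPath n k l) : f (dualPath n κ (mergeArrows n αq γ₁ γ₂) β₁ β₂ k l) = d k l := by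
  simp only [map_dualPath, map_mergeArrows, hκ, hα, hγ₁, hγ₂, hβ₁, hβ₂]
  exact t.dualPath_eq hn hkl

end Map

end IsMulTable

def tableFamily (n : ℕ) (p d : ℕ → ℕ → R) : paths n ⊕ paths n → R :=
  Sum.elim (fun q => p q.1.1 q.1.2) (fun q => d q.1.1 q.1.2)

section Span

variable (K : Type) [CommRing K] [Algebra K R] {n : ℕ} {p d : ℕ → ℕ → R}

theorem p_mem_span_tableFamily {i j : ℕ} (hij : HasPath n i j) :
    p i j ∈ Submodule.span K (Set.range (tableFamily n p d)) :=
  Submodule.subset_span ⟨.inl ⟨(i, j), mem_paths.2 hij⟩, rfl⟩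

theorem d_mem_span_tableFamily {i j : ℕ} (hij : HasPath n i j) :
    d i j ∈ Submodule.span K (Set.range (tableFamily n p d)) :=
  Submodule.subset_span ⟨.inr ⟨(i, j), mem_paths.2 hij⟩, rfl⟩

theorem IsMulTable.mul_mem_span (t : IsMulTable n p d) :
    ∀ x ∈ Set.range (tableFamily n p d), ∀ y ∈ Set.range (tableFamily n p d),
      x * y ∈ Submodule.span K (Set.range (tableFamily n p d)) := by
  rintro _ ⟨q | q, rfl⟩ _ ⟨r | r, rfl⟩ <;>
    have hq := mem_paths.1 q.2 <;> have hr := mem_paths.1 r.2 <;>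
    simp only [tableFamily, Sum.elim_inl, Sum.elim_inr]
  · rw [t.mul_pp hr hq]
    split_ifs with h
    · exact p_mem_span_tableFamily K (hr.trans (h ▸ hq))
    · exact zero_mem _
  · rw [t.mul_pd hq hr]
    split_ifs with h
    · exact d_mem_span_tableFamily K h.2
    · exact zero_mem _
  · rw [t.mul_dp hr hq]
    split_ifs with h
    · exact d_mem_span_tableFamily K h.2
    · exact zero_mem _
  · rw [t.mul_dd hr hq]
    exact zero_mem _

end Span

theorem path_mem_span (K : Type) [CommRing K] [Algebra K R] {n : ℕ} (e α : ℕ → R) {i j : ℕ}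
    (hij : HasPath n i j) :
    path n e α i j ∈ Submodule.span K (Set.range fun q : paths n => path n e α q.1.1 q.1.2) :=
  Submodule.subset_span ⟨⟨(i, j), mem_paths.2 hij⟩, rfl⟩

section Presentations

variable (K : Type) [CommRing K] {C : Type} [Ring C] [Algebra K C]

def IsPathAlgebra (n : ℕ) (e α : ℕ → C) : Prop :=
  ∀ (S : Type) [Ring S] [Algebra K S] (e' α' : ℕ → S), PathRelations n e' α' →
    ∃! f : C →ₐ[K] S, (∀ i, f (e i) = e' i) ∧ ∀ i, f (α i) = α' i

def IsBoundQuiverAlgebra (n : ℕ) (κ αq : ℕ → C) (γ₁ γ₂ β₁ β₂ : C) : Prop :=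
  ∀ (S : Type) [Ring S] [Algebra K S] (κ' αq' : ℕ → S) (γ₁' γ₂' β₁' β₂' : S),
    TrivExtRelations n κ' αq' γ₁' γ₂' β₁' β₂' →
    ∃! f : C →ₐ[K] S, (∀ i, f (κ i) = κ' i) ∧ (∀ i, f (αq i) = αq' i) ∧
      f γ₁ = γ₁' ∧ f γ₂ = γ₂' ∧ f β₁ = β₁' ∧ f β₂ = β₂'

variable {K}

theorem IsPathAlgebra.eq_top {n : ℕ} {e α : ℕ → C} (hC : IsPathAlgebra K n e α)
    (h : PathRelations n e α) (S : Subalgebra K C) (he : ∀ i, e i ∈ S) (hα : ∀ i, α i ∈ S) :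
    S = ⊤ := by
  obtain ⟨f, ⟨hfe, hfα⟩, -⟩ := hC S (fun i => ⟨e i, he i⟩) (fun i => ⟨α i, hα i⟩)
    (.of_injective (f := S.val) Subtype.val_injective h)
  obtain ⟨g, -, hg⟩ := hC C e α h
  refine S.eq_top_of_val_comp_eq_id f ((hg _ ⟨fun i => ?_, fun i => ?_⟩).trans
    (hg _ ⟨fun _ => rfl, fun _ => rfl⟩).symm)
  · simp [hfe]
  · simp [hfα]

theorem IsBoundQuiverAlgebra.eq_top {n : ℕ} {κ αq : ℕ → C} {γ₁ γ₂ β₁ β₂ : C}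
    (hP : IsBoundQuiverAlgebra K n κ αq γ₁ γ₂ β₁ β₂) (h : TrivExtRelations n κ αq γ₁ γ₂ β₁ β₂)
    (S : Subalgebra K C) (hκ : ∀ i, κ i ∈ S) (hα : ∀ i, αq i ∈ S) (hγ₁ : γ₁ ∈ S) (hγ₂ : γ₂ ∈ S)
    (hβ₁ : β₁ ∈ S) (hβ₂ : β₂ ∈ S) : S = ⊤ := by
  obtain ⟨f, ⟨hfκ, hfα, hfγ₁, hfγ₂, hfβ₁, hfβ₂⟩, -⟩ := hP S (fun i => ⟨κ i, hκ i⟩)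
    (fun i => ⟨αq i, hα i⟩) ⟨γ₁, hγ₁⟩ ⟨γ₂, hγ₂⟩ ⟨β₁, hβ₁⟩ ⟨β₂, hβ₂⟩
    (.of_injective (f := S.val) Subtype.val_injective h)
  obtain ⟨g, -, hg⟩ := hP C κ αq γ₁ γ₂ β₁ β₂ h
  refine S.eq_top_of_val_comp_eq_id f ((hg _ ⟨fun i => ?_, fun i => ?_, ?_, ?_, ?_, ?_⟩).trans
    (hg _ ⟨fun _ => rfl, fun _ => rfl, rfl, rfl, rfl, rfl⟩).symm) <;> simp [*]

theorem IsPathAlgebra.span_path_eq_top {n : ℕ} {e α : ℕ → C} (hC : IsPathAlgebra K n e α)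
    (h : PathRelations n e α) (hn : 4 ≤ n) :
    Submodule.span K (Set.range fun q : paths n => path n e α q.1.1 q.1.2) = ⊤ := by
  set V := Submodule.span K (Set.range fun q : paths n => path n e α q.1.1 q.1.2)
  have hmem {i j : ℕ} (hij : HasPath n i j) : path n e α i j ∈ V := path_mem_span K e α hij
  have he (i : ℕ) : e i ∈ V := by
    by_cases hi : 1 ≤ i ∧ i ≤ n
    · rw [← path_self (n := n) e α i]; exact hmem (hasPath_self hi.1 hi.2)
    · rw [h.e_eq_zero i hi]; exact zero_mem _
  have hα (i : ℕ) : α i ∈ V := by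
    by_cases hi : 1 ≤ i ∧ i ≤ n - 3
    · rw [← h.path_succ hi.1 hi.2]; exact hmem (by omega)
    by_cases hi₂ : i = n - 2
    · rw [hi₂, ← h.path_sub_two_sub_one hn]; exact hmem (by omega)
    by_cases hi₁ : i = n - 1
    · rw [hi₁, ← h.path_sub_two_top hn]; exact hmem (by omega)
    · rw [h.α_eq_zero i (by omega)]; exact zero_mem _
  refine Submodule.span_eq_top_of_mul_mem ?_ ?_ fun S hS =>
    hC.eq_top h S (fun i => hS (he i)) (fun i => hS (hα i))
  · rw [← h.sum_e]; exact Submodule.sum_mem _ fun i _ => he i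
  · rintro _ ⟨q, rfl⟩ _ ⟨r, rfl⟩
    rw [h.path_mul_path (mem_paths.1 r.2) (mem_paths.1 q.2)]
    split_ifs with hrq
    · exact hmem ((mem_paths.1 r.2).trans (hrq ▸ mem_paths.1 q.2))
    · exact zero_mem _

theorem IsBoundQuiverAlgebra.span_eq_top {n : ℕ} {κ αq : ℕ → C} {γ₁ γ₂ β₁ β₂ : C}
    (hP : IsBoundQuiverAlgebra K n κ αq γ₁ γ₂ β₁ β₂) (h : TrivExtRelations n κ αq γ₁ γ₂ β₁ β₂)
    (hn : 4 ≤ n) :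
    Submodule.span K (Set.range (tableFamily n (path n κ (mergeArrows n αq γ₁ γ₂))
      (dualPath n κ (mergeArrows n αq γ₁ γ₂) β₁ β₂))) = ⊤ := by
  have hR := h.pathRelations hn
  set V := Submodule.span K (Set.range (tableFamily n (path n κ (mergeArrows n αq γ₁ γ₂))
    (dualPath n κ (mergeArrows n αq γ₁ γ₂) β₁ β₂)))
  have hp {i j : ℕ} (hij : HasPath n i j) : path n κ (mergeArrows n αq γ₁ γ₂) i j ∈ V :=
    p_mem_span_tableFamily K hij
  have hd {i j : ℕ} (hij : HasPath n i j) : dualPath n κ (mergeArrows n αq γ₁ γ₂) β₁ β₂ i j ∈ V :=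
    d_mem_span_tableFamily K hij
  have hκ (i : ℕ) : κ i ∈ V := by
    by_cases hi : 1 ≤ i ∧ i ≤ n
    · rw [← path_self (n := n) κ (mergeArrows n αq γ₁ γ₂) i]; exact hp (hasPath_self hi.1 hi.2)
    · rw [h.κ_eq_zero i hi]; exact zero_mem _
  have hα (i : ℕ) : αq i ∈ V := by
    by_cases hi : 1 ≤ i ∧ i ≤ n - 3
    · have := hR.path_succ hi.1 hi.2
      rw [mergeArrows, if_neg (by omega), if_neg (by omega)] at this
      exact this ▸ hp (by omega)
    · rw [h.α_eq_zero i hi]; exact zero_mem _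
  have hγ₁ : γ₁ ∈ V := by
    have := hR.path_sub_two_sub_one hn
    rw [mergeArrows_sub_two] at this
    exact this ▸ hp (i := n - 2) (j := n - 1) (by omega)
  have hγ₂ : γ₂ ∈ V := by
    have := hR.path_sub_two_top hn
    rw [mergeArrows_sub_one (by omega)] at this
    exact this ▸ hp (i := n - 2) (j := n) (by omega)
  have hβ₁ : β₁ ∈ V := h.dualPath_one_sub_one hn ▸ hd (i := 1) (j := n - 1) (by omega)
  have hβ₂ : β₂ ∈ V := h.dualPath_one_top hn ▸ hd (i := 1) (j := n) (by omega)
  refine Submodule.span_eq_top_of_mul_mem ?_ ((h.isMulTable hn).mul_mem_span K) fun S hS =>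
    hP.eq_top h S (fun i => hS (hκ i)) (fun i => hS (hα i)) (hS hγ₁) (hS hγ₂) (hS hβ₁) (hS hβ₂)
  rw [← h.sum_κ]
  exact Submodule.sum_mem _ fun i _ => hκ i

end Presentations

section MatrixRepresentation

def vtx {n : ℕ} (h₀ : 0 < n) (i : ℕ) : Fin n := ⟨min (i - 1) (n - 1), by omega⟩

theorem vtx_inj {n : ℕ} (h₀ : 0 < n) {i j : ℕ} (hi : 1 ≤ i) (hi' : i ≤ n) (hj : 1 ≤ j)
    (hj' : j ≤ n) : vtx h₀ i = vtx h₀ j ↔ i = j := by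
  simp only [vtx, Fin.ext_iff]
  omega

variable (K : Type) [CommRing K]

def matrixPath {n : ℕ} (h₀ : 0 < n) (i j : ℕ) : Matrix (Fin n) (Fin n) K :=
  Matrix.single (vtx h₀ j) (vtx h₀ i) 1

theorem isMulTable_matrixPath {n : ℕ} (h₀ : 0 < n) : IsMulTable n (matrixPath K h₀) 0 where
  sum_diag := by
    rw [← Matrix.sum_single_one]
    refine Finset.sum_nbij' (vtx h₀) (fun x => x.val + 1) (by simp) ?_ ?_ ?_ fun _ _ => rfl
    · intro x _; simp only [Finset.mem_Icc]; omega
    · intro i hi; simp only [Finset.mem_Icc] at hi; simp only [vtx]; omega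
    · intro x _; ext; simp only [vtx]; omega
  mul_pp {i j k l} hij hkl := by
    unfold matrixPath
    split_ifs with hjk
    · rw [hjk, Matrix.single_mul_single_same, one_mul]
    · rw [Matrix.single_mul_single_of_ne]
      rw [Ne, vtx_inj h₀]
      · exact Ne.symm hjk
      all_goals omega
  mul_pd _ _ := by simp
  mul_dp _ _ := by simp
  mul_dd _ _ := by simp

variable {K} {C : Type} [Ring C] [Algebra K C]

theorem IsPathAlgebra.linearIndependent_path {n : ℕ} {e α : ℕ → C} (hC : IsPathAlgebra K n e α)
    (hn : 4 ≤ n) : LinearIndependent K (fun q : paths n => path n e α q.1.1 q.1.2) := by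
  have h₀ : 0 < n := by omega
  have t := isMulTable_matrixPath K h₀
  obtain ⟨ρ, ⟨hρe, hρα⟩, -⟩ := hC _ _ _ ((t.trivExtRelations hn).pathRelations hn)
  refine LinearIndependent.of_comp ρ.toLinearMap ?_
  have hρ : ∀ q : paths n, ρ (path n e α q.1.1 q.1.2) =
      Matrix.stdBasis K (Fin n) (Fin n) (vtx h₀ q.1.2, vtx h₀ q.1.1) := by
    intro q
    rw [Matrix.stdBasis_eq_single, map_path]
    simp only [hρe, hρα]
    exact t.path_eq hn (mem_paths.1 q.2)
  rw [show ⇑ρ.toLinearMap ∘ _ = _ from funext hρ]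
  refine (Matrix.stdBasis K _ _).linearIndependent.comp _ fun q r hqr => ?_
  have hq := mem_paths.1 q.2
  have hr := mem_paths.1 r.2
  simp only [Prod.mk.injEq] at hqr
  rw [vtx_inj h₀, vtx_inj h₀] at hqr
  · exact Subtype.ext (Prod.ext hqr.2 hqr.1)
  all_goals omega

noncomputable def IsPathAlgebra.pathBasis {n : ℕ} {e α : ℕ → C} (hC : IsPathAlgebra K n e α)
    (h : PathRelations n e α) (hn : 4 ≤ n) : Module.Basis (paths n) K C :=
  .mk (hC.linearIndependent_path hn) (hC.span_path_eq_top h hn).ge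

theorem IsPathAlgebra.pathBasis_apply {n : ℕ} {e α : ℕ → C} (hC : IsPathAlgebra K n e α)
    (h : PathRelations n e α) (hn : 4 ≤ n) (q : paths n) :
    hC.pathBasis h hn q = path n e α q.1.1 q.1.2 :=
  Module.Basis.mk_apply _ _ _

end MatrixRepresentation

section PathCoord

variable {K C : Type} [CommRing K] [Ring C] [Algebra K C]

noncomputable def pathCoord {n : ℕ} (b : Module.Basis (paths n) K C) (k l : ℕ) :
    Module.Dual K C :=
  if h : HasPath n k l then b.coord ⟨(k, l), mem_paths.2 h⟩ else 0

variable {n : ℕ} {e α : ℕ → C} {b : Module.Basis (paths n) K C}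
  (hb : ∀ q, b q = path n e α q.1.1 q.1.2)
include hb

theorem pathCoord_path {i j : ℕ} (hij : HasPath n i j) (k l : ℕ) :
    pathCoord b k l (path n e α i j) = if i = k ∧ j = l then 1 else 0 := by
  rw [← hb ⟨(i, j), mem_paths.2 hij⟩, pathCoord]
  split_ifs with hkl hikl hikl
  · obtain ⟨rfl, rfl⟩ := hikl
    rw [Module.Basis.coord_apply, Module.Basis.repr_self, Finsupp.single_eq_same]
  · rw [Module.Basis.coord_apply, Module.Basis.repr_self, Finsupp.single_apply, if_neg]
    intro hq
    exact hikl ⟨congrArg (·.1.1) hq, congrArg (·.1.2) hq⟩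
  · exact absurd (hikl.1 ▸ hikl.2 ▸ hij) hkl
  · rfl

variable (h : PathRelations n e α)
include h

theorem pathCoord_comp_mulRight {i j k l : ℕ} (hij : HasPath n i j) :
    pathCoord b k l ∘ₗ LinearMap.mulRight K (path n e α i j) =
      if k = i ∧ HasPath n j l then pathCoord b j l else 0 := by
  refine b.ext fun ⟨(p, q), hpq⟩ => ?_
  replace hpq := mem_paths.1 hpq
  rw [hb, LinearMap.comp_apply, LinearMap.mulRight_apply, h.path_mul_path hij hpq]
  by_cases hjp : j = p
  · subst hjp
    rw [if_pos rfl, pathCoord_path hb (hij.trans hpq)]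
    by_cases hk : k = i ∧ HasPath n j l
    · rw [if_pos hk, pathCoord_path hb hpq, hk.1]
      simp
    · rw [if_neg hk, LinearMap.zero_apply, if_neg]
      rintro ⟨rfl, rfl⟩
      exact hk ⟨rfl, hpq⟩
  · rw [if_neg hjp, map_zero]
    split_ifs
    · rw [pathCoord_path hb hpq, if_neg fun h' => hjp h'.1.symm]
    · rfl

theorem pathCoord_comp_mulLeft {i j k l : ℕ} (hij : HasPath n i j) :
    pathCoord b k l ∘ₗ LinearMap.mulLeft K (path n e α i j) =
      if l = j ∧ HasPath n k i then pathCoord b k i else 0 := by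
  refine b.ext fun ⟨(p, q), hpq⟩ => ?_
  replace hpq := mem_paths.1 hpq
  rw [hb, LinearMap.comp_apply, LinearMap.mulLeft_apply, h.path_mul_path hpq hij]
  by_cases hqi : q = i
  · subst hqi
    rw [if_pos rfl, pathCoord_path hb (hpq.trans hij)]
    by_cases hl : l = j ∧ HasPath n k q
    · rw [if_pos hl, pathCoord_path hb hpq, hl.1]
      simp [and_comm]
    · rw [if_neg hl, LinearMap.zero_apply, if_neg]
      rintro ⟨rfl, rfl⟩
      exact hl ⟨rfl, hpq⟩
  · rw [if_neg hqi, map_zero]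
    split_ifs
    · rw [pathCoord_path hb hpq, if_neg fun h' => hqi h'.2]
    · rfl

theorem isMulTable_trivialExtension {E : Type} [Ring E] [Algebra K E]
    {ι : E ≃ₗ[K] C × Module.Dual K C} (hE : IsTrivialExtension ι) :
    IsMulTable n (fun i j => hE.inl (path n e α i j)) (fun k l => ι.symm (0, pathCoord b k l)) where
  sum_diag := by simp only [path_self, ← map_sum, h.sum_e, map_one]
  mul_pp hij hkl := by
    simp only [← map_mul, h.path_mul_path hij hkl]
    split_ifs <;> simp
  mul_pd hij hkl := by
    simp only [hE.inl_mul_inr, pathCoord_comp_mulRight hb h hij]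
    split_ifs <;> simp
  mul_dp hij hkl := by
    simp only [hE.inr_mul_inl, pathCoord_comp_mulLeft hb h hij]
    split_ifs <;> simp
  mul_dd _ _ := hE.inr_mul_inr _ _

end PathCoord

end DnQuiver

/-- Let `K` be a field and `n ≥ 4`.  Let `B` be the trivial extension
algebra `T(KΓ)` of the path algebra `C` of the `D_n` quiver `Γ` with vertices `1, …, n`,
arrows `a_i : i → i+1` for `1 ≤ i ≤ n−3`, `a_{n−2} : n−2 → n−1` and `a_{n−1} : n−2 → n`.
Then `B` is isomorphic to `KQ/I`, where `Q` is the quiver with vertices `1, …, n` and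
arrows `α_i : i → i+1` for `1 ≤ i ≤ n−3`, `γ_{n−1} : n−2 → n−1`, `γ_n : n−2 → n`,
`β_{n−1} : n−1 → 1`, `β_n : n → 1`, and `I` is the two-sided ideal generated by:
`β_{n−1}γ_{n−1} − β_nγ_n`; the cycles `α_i⋯α_1 β_n γ_n α_{n−3}⋯α_i` for all
`1 ≤ i ≤ n−3`; `γ_n α_{n−3}⋯α_1 β_{n−1}`; and `γ_{n−1} α_{n−3}⋯α_1 β_n`
(paths composed right-to-left).

Here `C` and `P = KQ/I` are pinned down by their universal properties as presented
algebras, and `E ≅ C ⊕ C^∨` is the trivial extension `T(C)`, recorded by a `K`-linear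
equivalence `ι` transporting the multiplication
`(x,f)·(y,g) = (xy, xg + fy)` with `(xg)(b) = g(bx)` and `(fy)(b) = f(yb)`. -/
theorem statement9 (K : Type) [Field K] (n : ℕ) (hn : 4 ≤ n)
    -- the path algebra C of the D_n quiver: idempotents ε i, arrows a i
    (C : Type) [Ring C] [Algebra K C] (ε : ℕ → C) (a : ℕ → C)
    (hε0 : ∀ i, ¬ (1 ≤ i ∧ i ≤ n) → ε i = 0)
    (ha0 : ∀ i, ¬ (1 ≤ i ∧ i ≤ n - 1) → a i = 0)
    (hidem : ∀ i, ε i * ε i = ε i)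
    (horth : ∀ i j, i ≠ j → ε i * ε j = 0)
    (hsum : ∑ i ∈ Finset.Icc 1 n, ε i = 1)
    (hcomp : ∀ i, 1 ≤ i → i ≤ n - 3 → ε (i + 1) * a i = a i ∧ a i * ε i = a i)
    (hcomp2 : ε (n - 1) * a (n - 2) = a (n - 2) ∧ a (n - 2) * ε (n - 2) = a (n - 2))
    (hcomp3 : ε n * a (n - 1) = a (n - 1) ∧ a (n - 1) * ε (n - 2) = a (n - 1))
    (hfree : ∀ (S : Type) [Ring S] [Algebra K S] (ε' : ℕ → S) (a' : ℕ → S),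
      (∀ i, ¬ (1 ≤ i ∧ i ≤ n) → ε' i = 0) →
      (∀ i, ¬ (1 ≤ i ∧ i ≤ n - 1) → a' i = 0) →
      (∀ i, ε' i * ε' i = ε' i) →
      (∀ i j, i ≠ j → ε' i * ε' j = 0) →
      (∑ i ∈ Finset.Icc 1 n, ε' i = 1) →
      (∀ i, 1 ≤ i → i ≤ n - 3 → ε' (i + 1) * a' i = a' i ∧ a' i * ε' i = a' i) →
      (ε' (n - 1) * a' (n - 2) = a' (n - 2) ∧ a' (n - 2) * ε' (n - 2) = a' (n - 2)) →
      (ε' n * a' (n - 1) = a' (n - 1) ∧ a' (n - 1) * ε' (n - 2) = a' (n - 1)) →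
      ∃! f : C →ₐ[K] S, (∀ i, f (ε i) = ε' i) ∧ (∀ i, f (a i) = a' i))
    -- the trivial extension E = T(C)
    (E : Type) [Ring E] [Algebra K E] (ι : E ≃ₗ[K] C × (C →ₗ[K] K))
    (hone : ι 1 = (1, 0))
    (hmul : ∀ u v : E, ι (u * v) =
      ((ι u).1 * (ι v).1,
        ((ι v).2).comp (LinearMap.mulRight K (ι u).1) +
          ((ι u).2).comp (LinearMap.mulLeft K (ι v).1)))
    -- the algebra P = KQ/I: idempotents κ i, arrows αq i (1 ≤ i ≤ n−3),
    -- γ1 = γ_{n−1}, γ2 = γ_n, b1 = β_{n−1}, b2 = β_n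
    (P : Type) [Ring P] [Algebra K P] (κ : ℕ → P) (αq : ℕ → P) (γ1 γ2 b1 b2 : P)
    (hκ0 : ∀ i, ¬ (1 ≤ i ∧ i ≤ n) → κ i = 0)
    (hαq0 : ∀ i, ¬ (1 ≤ i ∧ i ≤ n - 3) → αq i = 0)
    (hκidem : ∀ i, κ i * κ i = κ i)
    (hκorth : ∀ i j, i ≠ j → κ i * κ j = 0)
    (hκsum : ∑ i ∈ Finset.Icc 1 n, κ i = 1)
    (hαcomp : ∀ i, 1 ≤ i → i ≤ n - 3 → κ (i + 1) * αq i = αq i ∧ αq i * κ i = αq i)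
    (hγ1comp : κ (n - 1) * γ1 = γ1 ∧ γ1 * κ (n - 2) = γ1)
    (hγ2comp : κ n * γ2 = γ2 ∧ γ2 * κ (n - 2) = γ2)
    (hb1comp : κ 1 * b1 = b1 ∧ b1 * κ (n - 1) = b1)
    (hb2comp : κ 1 * b2 = b2 ∧ b2 * κ n = b2)
    (hrel1 : b1 * γ1 - b2 * γ2 = 0)
    (hrel2 : ∀ i, 1 ≤ i → i ≤ n - 3 →
      chainProd αq 1 i * b2 * γ2 * chainProd αq i (n - 2 - i) = 0)
    (hrel3 : γ2 * chainProd αq 1 (n - 3) * b1 = 0)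
    (hrel4 : γ1 * chainProd αq 1 (n - 3) * b2 = 0)
    (hPfree : ∀ (S : Type) [Ring S] [Algebra K S]
      (κ' : ℕ → S) (αq' : ℕ → S) (γ1' γ2' b1' b2' : S),
      (∀ i, ¬ (1 ≤ i ∧ i ≤ n) → κ' i = 0) →
      (∀ i, ¬ (1 ≤ i ∧ i ≤ n - 3) → αq' i = 0) →
      (∀ i, κ' i * κ' i = κ' i) →
      (∀ i j, i ≠ j → κ' i * κ' j = 0) →
      (∑ i ∈ Finset.Icc 1 n, κ' i = 1) →
      (∀ i, 1 ≤ i → i ≤ n - 3 → κ' (i + 1) * αq' i = αq' i ∧ αq' i * κ' i = αq' i) →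
      (κ' (n - 1) * γ1' = γ1' ∧ γ1' * κ' (n - 2) = γ1') →
      (κ' n * γ2' = γ2' ∧ γ2' * κ' (n - 2) = γ2') →
      (κ' 1 * b1' = b1' ∧ b1' * κ' (n - 1) = b1') →
      (κ' 1 * b2' = b2' ∧ b2' * κ' n = b2') →
      (b1' * γ1' - b2' * γ2' = 0) →
      (∀ i, 1 ≤ i → i ≤ n - 3 →
        chainProd αq' 1 i * b2' * γ2' * chainProd αq' i (n - 2 - i) = 0) →
      (γ2' * chainProd αq' 1 (n - 3) * b1' = 0) →
      (γ1' * chainProd αq' 1 (n - 3) * b2' = 0) →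
      ∃! f : P →ₐ[K] S, (∀ i, f (κ i) = κ' i) ∧ (∀ i, f (αq i) = αq' i) ∧
        f γ1 = γ1' ∧ f γ2 = γ2' ∧ f b1 = b1' ∧ f b2 = b2') :
    Nonempty (E ≃ₐ[K] P) := by
  have hC : DnQuiver.PathRelations n ε a :=
    ⟨hε0, ha0, hidem, horth, hsum, hcomp, hcomp2, hcomp3⟩
  have univC : DnQuiver.IsPathAlgebra K n ε a := fun S _ _ ε' a' h =>
    hfree S ε' a' h.1 h.2 h.3 h.4 h.5 h.6 h.7 h.8
  have hP : DnQuiver.TrivExtRelations n κ αq γ1 γ2 b1 b2 :=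
    ⟨hκ0, hαq0, hκidem, hκorth, hκsum, hαcomp, hγ1comp, hγ2comp, hb1comp, hb2comp, hrel1, hrel2,
      hrel3, hrel4⟩
  have univP : DnQuiver.IsBoundQuiverAlgebra K n κ αq γ1 γ2 b1 b2 :=
    fun S _ _ κ' αq' γ1' γ2' b1' b2' h => hPfree S κ' αq' γ1' γ2' b1' b2'
      h.1 h.2 h.3 h.4 h.5 h.6 h.7 h.8 h.9 h.10 h.11 h.12 h.13 h.14
  have hE : IsTrivialExtension ι := ⟨hone, hmul⟩
  let B := univC.pathBasis hC hn
  have tE := DnQuiver.isMulTable_trivialExtension (b := B) (univC.pathBasis_apply hC hn) hC hE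
  obtain ⟨f, ⟨hfκ, hfα, hfγ1, hfγ2, hfb1, hfb2⟩, -⟩ :=
    univP E _ _ _ _ _ _ (tE.trivExtRelations hn)
  refine ⟨(AlgEquiv.ofBijective f (f.toLinearMap.bijective_of_apply_eq_basis
    (univP.span_eq_top hP hn) ((B.prod B.dualBasis).map ι.symm) ?_)).symm⟩
  rintro (q | q)
  · rw [AlgHom.toLinearMap_apply, DnQuiver.tableFamily, Sum.elim_inl,
      tE.map_path_eq hn f hfκ hfα hfγ1 hfγ2 (DnQuiver.mem_paths.1 q.2)]
    simp [B, univC.pathBasis_apply hC hn, IsTrivialExtension.inl_apply]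
  · rw [AlgHom.toLinearMap_apply, DnQuiver.tableFamily, Sum.elim_inr,
      tE.map_dualPath_eq hn f hfκ hfα hfγ1 hfγ2 hfb1 hfb2 (DnQuiver.mem_paths.1 q.2)]
    simp [DnQuiver.pathCoord, DnQuiver.mem_paths.1 q.2]
end

section
/- Let K be any field and n ≥ 4. In the free associative algebra K⟨x, y⟩, the two-sided ideals I_n = (x², y², (x+y+xy)^{n−2}) and J_n = (x², y², (x+y)^{n−2}) are equal. -/
section aux

variable {Q : Type*} [Ring Q]

/-- Auxiliary unit sequence: `wA a b m` is invertible mod `a² = b² = 0` and satisfies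
`(a+b+ab)^m = wA a b m * (a+b)^m`. -/
def wA (a b : Q) : ℕ → Q
  | 0 => 1
  | 1 => 1 + a
  | (m+2) => (1 + a) * (1 + b) * wA a b m

/-- Inverse of `wA` modulo `a² = b² = 0`. -/
def wB (a b : Q) : ℕ → Q
  | 0 => 1
  | 1 => 1 - a
  | (m+2) => wB a b m * ((1 - b) * (1 - a))

theorem map_wA {Q' : Type*} [Ring Q'] (f : Q →+* Q') (a b : Q) (m : ℕ) :
    f (wA a b m) = wA (f a) (f b) m := by
  induction m using Nat.twoStepInduction with
  | zero => simp [wA]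
  | one => simp [wA]
  | more m ih _ => simp [wA, map_mul, map_add, map_one, ih]

theorem map_wB {Q' : Type*} [Ring Q'] (f : Q →+* Q') (a b : Q) (m : ℕ) :
    f (wB a b m) = wB (f a) (f b) m := by
  induction m using Nat.twoStepInduction with
  | zero => simp [wB]
  | one => simp [wB]
  | more m ih _ => simp [wB, map_mul, map_sub, map_one, ih]

variable {a b : Q} (ha : a ^ 2 = 0) (hb : b ^ 2 = 0)

include ha hb in
theorem wB_mul_wA : ∀ m, wB a b m * wA a b m = 1 := by
  have h1 : (1 - a) * (1 + a) = 1 := by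
    have : (1 - a) * (1 + a) = 1 - a ^ 2 := by noncomm_ring
    rw [this, ha, sub_zero]
  have h2 : (1 - b) * (1 + b) = 1 := by
    have : (1 - b) * (1 + b) = 1 - b ^ 2 := by noncomm_ring
    rw [this, hb, sub_zero]
  intro m
  induction m using Nat.twoStepInduction with
  | zero => simp [wA, wB]
  | one => exact h1
  | more m ih _ =>
    show (wB a b m * ((1 - b) * (1 - a))) * ((1 + a) * (1 + b) * wA a b m) = 1
    calc (wB a b m * ((1 - b) * (1 - a))) * ((1 + a) * (1 + b) * wA a b m)
        = wB a b m * ((1 - b) * (((1 - a) * (1 + a)) * (1 + b)) * wA a b m) := by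
          noncomm_ring
      _ = wB a b m * wA a b m := by rw [h1, one_mul, h2, one_mul]
      _ = 1 := ih

include ha hb in
theorem key_pow : ∀ m, (a + b + a * b) ^ m = wA a b m * (a + b) ^ m := by
  -- basic relations modulo a² = b² = 0
  have L1 : (a + b) * (a + b + a * b) = (a + b + b * a) * (a + b) := by
    have h : (a + b) * (a + b + a * b) - (a + b + b * a) * (a + b)
        = a ^ 2 * b - b * a ^ 2 := by noncomm_ring
    rw [ha] at h
    simp only [zero_mul, mul_zero, sub_zero] at h
    exact sub_eq_zero.mp h
  have L2 : (a + b) * (a + b + b * a) = (a + b + a * b) * (a + b) := by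
    have h : (a + b) * (a + b + b * a) - (a + b + a * b) * (a + b)
        = b ^ 2 * a - a * b ^ 2 := by noncomm_ring
    rw [hb] at h
    simp only [zero_mul, mul_zero, sub_zero] at h
    exact sub_eq_zero.mp h
  have hta : a + b + a * b = (1 + a) * (a + b) := by
    have h : (1 + a) * (a + b) = (a + b + a * b) + a ^ 2 := by noncomm_ring
    rw [h, ha, add_zero]
  have htb : a + b + b * a = (1 + b) * (a + b) := by
    have h : (1 + b) * (a + b) = (a + b + b * a) + b ^ 2 := by noncomm_ring
    rw [h, hb, add_zero]
  -- commutation of (a+b) past powers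
  have C1 : ∀ k, (a + b) * (a + b + a * b) ^ k = (a + b + b * a) ^ k * (a + b) := by
    intro k
    induction k with
    | zero => simp
    | succ k ih =>
      calc (a + b) * (a + b + a * b) ^ (k + 1)
          = ((a + b) * (a + b + a * b) ^ k) * (a + b + a * b) := by
            rw [pow_succ, mul_assoc]
        _ = (a + b + b * a) ^ k * ((a + b) * (a + b + a * b)) := by
            rw [ih, mul_assoc]
        _ = (a + b + b * a) ^ (k + 1) * (a + b) := by
            rw [L1, pow_succ, mul_assoc]
  have C2 : ∀ k, (a + b) * (a + b + b * a) ^ k = (a + b + a * b) ^ k * (a + b) := by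
    intro k
    induction k with
    | zero => simp
    | succ k ih =>
      calc (a + b) * (a + b + b * a) ^ (k + 1)
          = ((a + b) * (a + b + b * a) ^ k) * (a + b + b * a) := by
            rw [pow_succ, mul_assoc]
        _ = (a + b + a * b) ^ k * ((a + b) * (a + b + b * a)) := by
            rw [ih, mul_assoc]
        _ = (a + b + a * b) ^ (k + 1) * (a + b) := by
            rw [L2, pow_succ, mul_assoc]
  intro m
  induction m using Nat.twoStepInduction with
  | zero => simp [wA]
  | one => simpa [wA] using hta
  | more m ih _ =>
    show (a + b + a * b) ^ (m + 2) = (1 + a) * (1 + b) * wA a b m * (a + b) ^ (m + 2)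
    calc (a + b + a * b) ^ (m + 2)
        = (a + b + a * b) * (a + b + a * b) ^ (m + 1) := by rw [pow_succ']
      _ = (1 + a) * ((a + b) * (a + b + a * b) ^ (m + 1)) := by
          rw [hta, mul_assoc]
      _ = (1 + a) * ((a + b + b * a) ^ (m + 1) * (a + b)) := by rw [C1]
      _ = (1 + a) * (((a + b + b * a) * (a + b + b * a) ^ m) * (a + b)) := by
          rw [pow_succ']
      _ = (1 + a) * ((((1 + b) * (a + b)) * (a + b + b * a) ^ m) * (a + b)) := by
          rw [← htb]
      _ = (1 + a) * ((1 + b) * (((a + b) * (a + b + b * a) ^ m) * (a + b))) := by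
          noncomm_ring
      _ = (1 + a) * ((1 + b) * (((a + b + a * b) ^ m * (a + b)) * (a + b))) := by
          rw [C2]
      _ = (1 + a) * ((1 + b) * (((wA a b m * (a + b) ^ m) * (a + b)) * (a + b))) := by
          rw [ih]
      _ = (1 + a) * (1 + b) * wA a b m * ((a + b) ^ m * (a + b) * (a + b)) := by
          noncomm_ring
      _ = (1 + a) * (1 + b) * wA a b m * (a + b) ^ (m + 2) := by
          rw [pow_succ, pow_succ]

end aux

/-- Images under the quotient map by a two-sided ideal agree iff the difference is in the
ideal. -/
theorem mk'_eq_iff {R : Type*} [Ring R] (I : TwoSidedIdeal R) (x y : R) :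
    RingCon.mk' I.ringCon x = RingCon.mk' I.ringCon y ↔ x - y ∈ I := by
  rw [← I.rel_iff]
  exact RingCon.eq _

/-- The generator `x` of the free associative algebra `K⟨x,y⟩`. -/
noncomputable def freeX (K : Type) [Field K] : FreeAlgebra K (Fin 2) :=
  FreeAlgebra.ι K (0 : Fin 2)

/-- The generator `y` of the free associative algebra `K⟨x,y⟩`. -/
noncomputable def freeY (K : Type) [Field K] : FreeAlgebra K (Fin 2) :=
  FreeAlgebra.ι K (1 : Fin 2)

/-- Let `K` be any field and `n ≥ 4`.  In the free associative algebra
`K⟨x, y⟩`, the two-sided ideals `I_n = (x², y², (x+y+xy)^{n−2})` and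
`J_n = (x², y², (x+y)^{n−2})` are equal. -/
theorem statement15 (K : Type) [Field K] (n : ℕ) (hn : 4 ≤ n) :
    TwoSidedIdeal.span
        ({freeX K ^ 2, freeY K ^ 2,
          (freeX K + freeY K + freeX K * freeY K) ^ (n - 2)} :
          Set (FreeAlgebra K (Fin 2)))
      = TwoSidedIdeal.span
        ({freeX K ^ 2, freeY K ^ 2, (freeX K + freeY K) ^ (n - 2)} :
          Set (FreeAlgebra K (Fin 2))) := by
  set m := n - 2 with hm
  set X := freeX K with hX
  set Y := freeY K with hY
  set I0 : TwoSidedIdeal (FreeAlgebra K (Fin 2)) :=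
    TwoSidedIdeal.span {X ^ 2, Y ^ 2} with hI0
  set π : FreeAlgebra K (Fin 2) →+* I0.ringCon.Quotient := RingCon.mk' I0.ringCon with hπ
  have hX2 : X ^ 2 ∈ I0 := TwoSidedIdeal.subset_span (by simp)
  have hY2 : Y ^ 2 ∈ I0 := TwoSidedIdeal.subset_span (by simp)
  have ha : (π X) ^ 2 = 0 := by
    rw [← map_pow, ← map_zero π]
    rw [hπ, mk'_eq_iff]
    simpa using hX2
  have hb : (π Y) ^ 2 = 0 := by
    rw [← map_pow, ← map_zero π]
    rw [hπ, mk'_eq_iff]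
    simpa using hY2
  -- the two congruence facts
  have hT : (X + Y + X * Y) ^ m - wA X Y m * (X + Y) ^ m ∈ I0 := by
    rw [← mk'_eq_iff I0, ← hπ]
    simp only [map_pow, map_mul, map_add, map_wA]
    exact key_pow ha hb m
  have hS : (X + Y) ^ m - wB X Y m * (X + Y + X * Y) ^ m ∈ I0 := by
    rw [← mk'_eq_iff I0, ← hπ]
    simp only [map_pow, map_mul, map_add, map_wB]
    rw [key_pow ha hb m, ← mul_assoc, wB_mul_wA ha hb m, one_mul]
  -- inclusion of I0 into both spans
  have hle1 : I0 ≤ TwoSidedIdeal.span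
      ({X ^ 2, Y ^ 2, (X + Y + X * Y) ^ m} : Set (FreeAlgebra K (Fin 2))) := by
    rw [hI0]
    exact TwoSidedIdeal.span_mono (by intro u hu; simp only [Set.mem_insert_iff,
      Set.mem_singleton_iff] at hu ⊢; tauto)
  have hle2 : I0 ≤ TwoSidedIdeal.span
      ({X ^ 2, Y ^ 2, (X + Y) ^ m} : Set (FreeAlgebra K (Fin 2))) := by
    rw [hI0]
    exact TwoSidedIdeal.span_mono (by intro u hu; simp only [Set.mem_insert_iff,
      Set.mem_singleton_iff] at hu ⊢; tauto)
  apply le_antisymm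
  · intro z hz
    rw [TwoSidedIdeal.mem_span_iff] at hz
    apply hz
    intro u hu
    simp only [Set.mem_insert_iff, Set.mem_singleton_iff] at hu
    rcases hu with rfl | rfl | rfl
    · exact TwoSidedIdeal.subset_span (by simp)
    · exact TwoSidedIdeal.subset_span (by simp)
    · have heq : (X + Y + X * Y) ^ m
          = ((X + Y + X * Y) ^ m - wA X Y m * (X + Y) ^ m)
            + wA X Y m * (X + Y) ^ m := by abel
      rw [heq]
      exact TwoSidedIdeal.add_mem _ (hle2 hT)
        (TwoSidedIdeal.mul_mem_left _ _ _ (TwoSidedIdeal.subset_span (by simp)))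
  · intro z hz
    rw [TwoSidedIdeal.mem_span_iff] at hz
    apply hz
    intro u hu
    simp only [Set.mem_insert_iff, Set.mem_singleton_iff] at hu
    rcases hu with rfl | rfl | rfl
    · exact TwoSidedIdeal.subset_span (by simp)
    · exact TwoSidedIdeal.subset_span (by simp)
    · have heq : (X + Y) ^ m
          = ((X + Y) ^ m - wB X Y m * (X + Y + X * Y) ^ m)
            + wB X Y m * (X + Y + X * Y) ^ m := by abel
      rw [heq]
      exact TwoSidedIdeal.add_mem _ (hle1 hS)
        (TwoSidedIdeal.mul_mem_left _ _ _ (TwoSidedIdeal.subset_span (by simp)))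
end
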